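/- arXiv:1709.06226 — 7 statements merged into one kernel-verified Lean document; each statement's English description precedes it below -/
import Mathlib

section
/- If X is a topological space, then the lower powerspace A(X) (the set of closed subsets of X with the lower Vietoris topology) is sober. -/
open Set Topology

/-- The lower powerspace: closed subsets of `X`. -/
def LowerPS (X : Type*) [TopologicalSpace X] : Type _ := {A : Set X // IsClosed A}

/-- Lower Vietoris topology, generated by the sets `◇U = {A | A ∩ U ≠ ∅}` for `U` open. -/
instance (X : Type*) [TopologicalSpace X] : TopologicalSpace (LowerPS X) :=
  .generateFrom {S | ∃ U : Set X, IsOpen U ∧ S = {A : LowerPS X | (A.1 ∩ U).Nonempty}}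

/-- The upper powerspace: compact saturated subsets of `X`
(saturated = intersection of all open neighborhoods). -/
def UpperPS (X : Type*) [TopologicalSpace X] : Type _ :=
  {K : Set X // IsCompact K ∧ K = ⋂₀ {U : Set X | IsOpen U ∧ K ⊆ U}}

/-- Upper Vietoris topology, generated by the sets `□U = {K | K ⊆ U}` for `U` open. -/
instance (X : Type*) [TopologicalSpace X] : TopologicalSpace (UpperPS X) :=
  .generateFrom {S | ∃ U : Set X, IsOpen U ∧ S = {K : UpperPS X | K.1 ⊆ U}}

/-- A `Π⁰₂` subset. -/
def IsPi02 {Y : Type*} [TopologicalSpace Y] (S : Set Y) : Prop :=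
  ∃ U V : ℕ → Set Y, (∀ i, IsOpen (U i)) ∧ (∀ i, IsOpen (V i)) ∧
    ∀ y, y ∈ S ↔ ∀ i, y ∈ U i → y ∈ V i

/-- The Scott topology on `P(ω)`, generated by the sets `{x | F ⊆ x}` for finite `F`. -/
instance : TopologicalSpace (Set ℕ) :=
  .generateFrom {S | ∃ F : Finset ℕ, S = {x : Set ℕ | ↑F ⊆ x}}

/-- A space is quasi-Polish iff it is homeomorphic to a `Π⁰₂` subspace of `P(ω)`
with the Scott topology. -/
def QuasiPolish (X : Type*) [TopologicalSpace X] : Prop :=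
  ∃ S : Set (Set ℕ), IsPi02 S ∧ Nonempty (X ≃ₜ S)

/-- Scott-open subsets of a preorder. -/
def IsScottOpen {α : Type*} [Preorder α] (U : Set α) : Prop :=
  (∀ ⦃a b : α⦄, a ≤ b → a ∈ U → b ∈ U) ∧
  ∀ d : Set α, d.Nonempty → DirectedOn (· ≤ ·) d → ∀ a : α, IsLUB d a → a ∈ U →
    (d ∩ U).Nonempty

/-- The Scott topology on a preorder. -/
def scottTop (α : Type*) [Preorder α] : TopologicalSpace α := .generateFrom {U | IsScottOpen U}

/-- The frame of open subsets of `X`, ordered by inclusion. -/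
def OpensT (X : Type*) [TopologicalSpace X] : Type _ := {U : Set X // IsOpen U}

instance (X : Type*) [TopologicalSpace X] : PartialOrder (OpensT X) :=
  inferInstanceAs (PartialOrder {U : Set X // IsOpen U})

/-- `O(X)` carries the Scott topology. -/
instance (X : Type*) [TopologicalSpace X] : TopologicalSpace (OpensT X) := scottTop (OpensT X)

/-- `□◇U` in `K(A(X))`. -/
def boxDia {X : Type*} [TopologicalSpace X] (U : Set X) : Set (UpperPS (LowerPS X)) :=
  {𝒦 | ∀ A ∈ 𝒦.1, ((A : LowerPS X).1 ∩ U).Nonempty}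

/-- `◇□U` in `A(K(X))`. -/
def diaBox {X : Type*} [TopologicalSpace X] (U : Set X) : Set (LowerPS (UpperPS X)) :=
  {𝒜 | ∃ K ∈ 𝒜.1, (K : UpperPS X).1 ⊆ U}

/-- A space is consonant iff every Scott-open family of opens containing `U` contains
a compact-saturated filter neighborhood `▽K` of `U`. -/
def Consonant (X : Type*) [TopologicalSpace X] : Prop :=
  ∀ H : Set (OpensT X), IsScottOpen H → ∀ U ∈ H,
    ∃ K : UpperPS X, K.1 ⊆ U.1 ∧ ∀ V : OpensT X, K.1 ⊆ V.1 → V ∈ H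

/-- A space is co-consonant. -/
def CoConsonant (Y : Type*) [TopologicalSpace Y] : Prop :=
  ∀ H : Set (OpensT Y), IsScottOpen H → ∀ U ∈ H,
    ∃ F : Finset (Set Y), (∀ A ∈ F, IsClosed A) ∧ (∀ A ∈ F, (U.1 ∩ A).Nonempty) ∧
      ∀ V : OpensT Y, (∀ A ∈ F, (V.1 ∩ A).Nonempty) → V ∈ H

/-!
The specialisation order of `A(X)` is inclusion, which gives `T0`. An irreducible closed family
`S` of closed sets has the closure of its union as generic point: that closure meets every open
set met by some member of `S`, and irreducibility of `S` turns this into membership in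
`closure S = S`.
-/

theorem IsIrreducible.mem_closure_of_subbasis {α : Type*} [t : TopologicalSpace α]
    {g : Set (Set α)} (hg : t = .generateFrom g) {S : Set α} (hS : IsIrreducible S) {a : α}
    (h : ∀ u ∈ g, a ∈ u → (S ∩ u).Nonempty) : a ∈ closure S := by
  rw [(TopologicalSpace.isTopologicalBasis_of_subbasis hg).mem_closure_iff]
  rintro _ ⟨f, ⟨hf, hfg⟩, rfl⟩ haf
  have hopen : ∀ u ∈ hf.toFinset, IsOpen u := fun u hu ↦
    hg ▸ TopologicalSpace.isOpen_generateFrom_of_mem (hfg (hf.mem_toFinset.1 hu))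
  have hmeets : ∀ u ∈ hf.toFinset, (S ∩ u).Nonempty := fun u hu ↦
    h u (hfg (hf.mem_toFinset.1 hu)) (haf u (hf.mem_toFinset.1 hu))
  simpa only [hf.coe_toFinset, inter_comm] using isIrreducible_iff_sInter.1 hS _ hopen hmeets

namespace LowerPS

variable {X : Type*} [TopologicalSpace X]

theorem isOpen_inter_nonempty {U : Set X} (hU : IsOpen U) :
    IsOpen {A : LowerPS X | (A.1 ∩ U).Nonempty} :=
  TopologicalSpace.GenerateOpen.basic _ ⟨U, hU, rfl⟩

theorem specializes_iff {a b : LowerPS X} : a ⤳ b ↔ b.1 ⊆ a.1 := by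
  rw [Specializes, TopologicalSpace.nhds_generateFrom (a := b), le_iInf₂_iff]
  simp only [mem_ofPred_eq, Filter.le_principal_iff, and_imp]
  constructor
  · intro h x hxb
    by_contra hxa
    obtain ⟨y, hya, hyna⟩ := mem_of_mem_nhds <|
      h {A | (A.1 ∩ a.1ᶜ).Nonempty} ⟨x, hxb, hxa⟩ ⟨a.1ᶜ, a.2.isOpen_compl, rfl⟩
    exact hyna hya
  · rintro hba _ hb ⟨U, hU, rfl⟩
    exact (isOpen_inter_nonempty hU).mem_nhds <| hb.mono (inter_subset_inter_left U hba)

instance : T0Space (LowerPS X) :=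
  (t0Space_iff_inseparable _).2 fun _ _ hab ↦
    Subtype.ext <| (specializes_iff.1 hab.specializes').antisymm (specializes_iff.1 hab.specializes)

def sup (S : Set (LowerPS X)) : LowerPS X := ⟨closure (⋃ A ∈ S, A.1), isClosed_closure⟩

theorem subset_sup {S : Set (LowerPS X)} {A : LowerPS X} (hA : A ∈ S) : A.1 ⊆ (sup S).1 :=
  (subset_biUnion_of_mem hA).trans subset_closure

theorem sup_mem_closure {S : Set (LowerPS X)} (hS : IsIrreducible S) : sup S ∈ closure S := by
  refine hS.mem_closure_of_subbasis rfl ?_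
  rintro _ ⟨U, hU, rfl⟩ ⟨x, hx, hxU⟩
  obtain ⟨y, hyU, hy⟩ := mem_closure_iff.1 hx U hU hxU
  obtain ⟨A, hA, hyA⟩ := mem_iUnion₂.1 hy
  exact ⟨A, hA, y, hyA, hyU⟩

theorem isGenericPoint_sup {S : Set (LowerPS X)} (hS : IsIrreducible S) (hcl : IsClosed S) :
    IsGenericPoint (sup S) S := by
  have hsupS : sup S ∈ S := hcl.closure_subset (sup_mem_closure hS)
  exact isGenericPoint_iff_specializes.2 fun _ ↦
    ⟨fun h ↦ h.mem_closed hcl hsupS, fun hB ↦ specializes_iff.2 (subset_sup hB)⟩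

instance : QuasiSober (LowerPS X) :=
  ⟨fun hS hcl ↦ ⟨_, isGenericPoint_sup hS hcl⟩⟩

end LowerPS

/-- The lower powerspace of any topological space is sober
(sober = quasi-sober and T0). -/
theorem lowerPS_sober (X : Type*) [TopologicalSpace X] :
    QuasiSober (LowerPS X) ∧ T0Space (LowerPS X) :=
  ⟨inferInstance, inferInstance⟩
end

section
/- If X is a sober, countably based topological space, then the upper Vietoris topology on K(X) coincides with the Scott topology on K(X) ordered by reverse subset inclusion. -/
open Set Topology

/-- `K(X)` ordered by reverse inclusion. -/
instance (X : Type*) [TopologicalSpace X] : PartialOrder (UpperPS X) where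
  le K K' := K'.1 ⊆ K.1
  le_refl _ := subset_rfl
  le_trans _ _ _ h h' := fun x hx => h (h' hx)
  le_antisymm _ _ h h' := Subtype.ext (h'.antisymm h)

/-!
`□U` is Scott open because sober spaces are well-filtered: if a filtered family of compact
saturated sets all meet the closed set `Uᶜ`, Zorn's lemma gives a closed `C ⊆ Uᶜ` minimal among
the closed sets meeting every member; `C` is irreducible, and its generic point specializes to a
point of each member, hence lies in all of them since they are saturated. In particular directed
suprema in `K(X)` are intersections.

Conversely, let `𝒰` be Scott open and `K ∈ 𝒰`. Second countability gives a decreasing sequence of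
open sets `W n` forming a basis of the neighbourhoods of `K`. If no `□(W n)` were contained in `𝒰`,
pick `L n ⊆ W n` outside `𝒰`. The sets `K ∪ ⋃_{m ≥ n} L m` are compact, their saturations form an
increasing chain in `K(X)` with supremum `K`, and each lies below `L n`; Scott openness then puts
some `L n` into `𝒰`.
-/

open Filter

section

variable {X : Type*} [TopologicalSpace X]

theorem IsCompact.isCountablyGenerated_nhdsSet [SecondCountableTopology X] {K : Set X}
    (hK : IsCompact K) : (𝓝ˢ K).IsCountablyGenerated := by
  obtain ⟨B, hBc, -, hB⟩ := TopologicalSpace.exists_countable_basis X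
  suffices (𝓝ˢ K).HasBasis (fun t => t ⊆ B ∧ t.Finite ∧ K ⊆ ⋃₀ t) sUnion from
    (HasCountableBasis.mk this <| (countable_ofPred_finite_subset hBc).mono
      fun _ ht => And.intro ht.2.1 ht.1).isCountablyGenerated
  refine (hasBasis_nhdsSet K).to_hasBasis (fun U ⟨hU, hKU⟩ => ?_) fun t ht => ?_
  · obtain ⟨t, htB, ht, hKt⟩ :=
      hK.elim_finite_subcover_image (b := {u ∈ B | u ⊆ U}) (c := id)
        (fun u hu => hB.isOpen hu.1) fun x hx => by
          obtain ⟨u, huB, hxu, huU⟩ := hB.exists_subset_of_mem_open (hKU hx) hU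
          exact mem_biUnion ⟨huB, huU⟩ hxu
    exact ⟨t, ⟨fun u hu => (htB hu).1, ht, by simpa [sUnion_eq_biUnion] using hKt⟩,
      sUnion_subset fun u hu => (htB hu).2⟩
  · exact ⟨⋃₀ t, ⟨isOpen_sUnion fun u hu => hB.isOpen (ht.1 hu), ht.2.2⟩, subset_rfl⟩

theorem isCompact_union_iUnion_of_tendsto_smallSets {K : Set X} {L : ℕ → Set X}
    (hK : IsCompact K) (hL : ∀ n, IsCompact (L n)) (hLK : Tendsto L atTop (𝓝ˢ K).smallSets) :
    IsCompact (K ∪ ⋃ n, L n) := by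
  classical
  refine isCompact_of_finite_subcover fun {ι} U hUo hcover => ?_
  have hU {s : Finset ι} : IsOpen (⋃ i ∈ s, U i) := isOpen_biUnion fun i _ => hUo i
  obtain ⟨t₀, ht₀⟩ := hK.elim_finite_subcover U hUo (subset_union_left.trans hcover)
  obtain ⟨N, hN⟩ :=
    eventually_atTop.1 (tendsto_smallSets_iff.1 hLK _ (hU.mem_nhdsSet.2 ht₀))
  choose t ht using fun n => (hL n).elim_finite_subcover U hUo
    ((subset_iUnion L n).trans (subset_union_right.trans hcover))
  set T := t₀ ∪ (Finset.range N).biUnion t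
  have hT {s : Finset ι} (h : s ⊆ T) : ⋃ i ∈ s, U i ⊆ ⋃ i ∈ T, U i :=
    biUnion_subset_biUnion_left (Finset.coe_subset.2 h)
  refine ⟨T, union_subset (ht₀.trans (hT Finset.subset_union_left))
    (iUnion_subset fun n => ?_)⟩
  rcases lt_or_ge n N with hn | hn
  · exact (ht n).trans <| hT <|
      (Finset.subset_biUnion_of_mem t (Finset.mem_range.2 hn)).trans Finset.subset_union_right
  · exact (hN n hn).trans (hT Finset.subset_union_left)

theorem exists_minimal_isClosed_inter_nonempty {𝒦 : Set (Set X)}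
    (hcomp : ∀ K ∈ 𝒦, IsCompact K) {C : Set X} (hC : IsClosed C)
    (hmeet : ∀ K ∈ 𝒦, (K ∩ C).Nonempty) :
    ∃ C' ⊆ C, Minimal (fun A => IsClosed A ∧ ∀ K ∈ 𝒦, (K ∩ A).Nonempty) C' := by
  refine zorn_superset_nonempty _ (fun c hc hchain ⟨A, hA⟩ => ⟨⋂₀ c, ⟨?_, fun K hK => ?_⟩,
    fun A hA => sInter_subset_of_mem hA⟩) C ⟨hC, hmeet⟩
  · exact isClosed_sInter fun A hA => (hc hA).1
  · have : Nonempty c := ⟨⟨A, hA⟩⟩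
    by_contra hempty
    rw [not_nonempty_iff_eq_empty, sInter_eq_iInter] at hempty
    obtain ⟨A, hA⟩ := (hcomp K hK).elim_directed_family_closed (fun A : c => A.1)
      (fun A => (hc A.2).1) hempty fun A B => (hchain.total A.2 B.2).elim
        (fun h => ⟨A, subset_rfl, h⟩) fun h => ⟨B, h, subset_rfl⟩
    exact (hc A.2).2 K hK |>.ne_empty hA

theorem isIrreducible_of_minimal_isClosed_inter_nonempty {𝒦 : Set (Set X)}
    (hne : 𝒦.Nonempty) (hdir : DirectedOn (· ⊇ ·) 𝒦) {C : Set X}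
    (hC : Minimal (fun A => IsClosed A ∧ ∀ K ∈ 𝒦, (K ∩ A).Nonempty) C) : IsIrreducible C := by
  refine ⟨(hC.1.2 _ hne.some_mem).mono inter_subset_right,
    isPreirreducible_iff_isClosed_union_isClosed.2 fun Z₁ Z₂ hZ₁ hZ₂ hCZ => ?_⟩
  by_contra! h
  have hmiss (Z) (hZ : IsClosed Z) (hCZ : ¬C ⊆ Z) : ∃ K ∈ 𝒦, K ∩ (C ∩ Z) = ∅ := by
    by_contra! hmeet
    exact hCZ <|
      (hC.le_of_le ⟨hC.1.1.inter hZ, hmeet⟩ inter_subset_left).trans inter_subset_right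
  obtain ⟨K₁, hK₁, h₁⟩ := hmiss Z₁ hZ₁ h.1
  obtain ⟨K₂, hK₂, h₂⟩ := hmiss Z₂ hZ₂ h.2
  obtain ⟨K, hK, hKK₁, hKK₂⟩ := hdir K₁ hK₁ K₂ hK₂
  obtain ⟨x, hxK, hxC⟩ := hC.1.2 K hK
  rcases hCZ hxC with hx | hx
  · exact h₁.subset ⟨hKK₁ hxK, hxC, hx⟩
  · exact h₂.subset ⟨hKK₂ hxK, hxC, hx⟩

theorem QuasiSober.exists_mem_subset_of_sInter_subset [QuasiSober X] {𝒦 : Set (Set X)}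
    (hne : 𝒦.Nonempty) (hdir : DirectedOn (· ⊇ ·) 𝒦) (hcomp : ∀ K ∈ 𝒦, IsCompact K)
    (hsat : ∀ K ∈ 𝒦, nhdsKer K ⊆ K) {U : Set X} (hU : IsOpen U) (hsub : ⋂₀ 𝒦 ⊆ U) :
    ∃ K ∈ 𝒦, K ⊆ U := by
  by_contra! hmeet
  obtain ⟨C, hCU, hC⟩ := exists_minimal_isClosed_inter_nonempty hcomp hU.isClosed_compl
    fun K hK => inter_compl_nonempty_iff.2 (hmeet K hK)
  obtain ⟨x, hx⟩ :=
    QuasiSober.sober (isIrreducible_of_minimal_isClosed_inter_nonempty hne hdir hC) hC.1.1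
  refine hCU hx.mem (hsub fun K hK => hsat K hK ?_)
  obtain ⟨y, hyK, hyC⟩ := hC.1.2 K hK
  exact mem_nhdsKer_iff_specializes.2 ⟨y, hyK, hx.specializes hyC⟩

end

namespace UpperPS

variable {X : Type*} [TopologicalSpace X]

theorem nhdsKer_coe (K : UpperPS X) : nhdsKer K.1 = K.1 :=
  (nhdsKer_def _).trans K.2.2.symm

theorem eq_sInter_of_nhdsKer_subset {K : Set X} (h : nhdsKer K ⊆ K) :
    K = ⋂₀ {U : Set X | IsOpen U ∧ K ⊆ U} :=
  (h.antisymm subset_nhdsKer).symm.trans (nhdsKer_def K)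

def saturation {S : Set X} (hS : IsCompact S) : UpperPS X :=
  ⟨nhdsKer S, hS.nhdsKer, eq_sInter_of_nhdsKer_subset (nhdsKer_nhdsKer S).le⟩

theorem isOpen_setOf_subset {U : Set X} (hU : IsOpen U) :
    IsOpen {K : UpperPS X | K.1 ⊆ U} :=
  TopologicalSpace.isOpen_generateFrom_of_mem ⟨U, hU, rfl⟩

theorem exists_mem_subset_of_iInter_subset [QuasiSober X] {d : Set (UpperPS X)}
    (hne : d.Nonempty) (hdir : DirectedOn (· ≤ ·) d) {U : Set X} (hU : IsOpen U)
    (hsub : ⋂ K ∈ d, K.1 ⊆ U) : ∃ K ∈ d, K.1 ⊆ U := by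
  obtain ⟨_, ⟨K, hK, rfl⟩, hKU⟩ :=
    QuasiSober.exists_mem_subset_of_sInter_subset (hne.image _) (directedOn_image.2 hdir)
      (by rintro _ ⟨K, -, rfl⟩; exact K.2.1) (by rintro _ ⟨K, -, rfl⟩; exact K.nhdsKer_coe.le)
      hU ((sInter_image _ _).subset.trans hsub)
  exact ⟨K, hK, hKU⟩

theorem coe_eq_iInter_of_isLUB [QuasiSober X] {d : Set (UpperPS X)} (hne : d.Nonempty)
    (hdir : DirectedOn (· ≤ ·) d) {a : UpperPS X} (ha : IsLUB d a) :
    a.1 = ⋂ K ∈ d, K.1 := by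
  have hcomp : IsCompact (⋂ K ∈ d, K.1) := isCompact_of_finite_subcover fun U hUo hcover => by
    obtain ⟨K, hK, hKU⟩ :=
      exists_mem_subset_of_iInter_subset hne hdir (isOpen_iUnion hUo) hcover
    obtain ⟨t, ht⟩ := K.2.1.elim_finite_subcover U hUo hKU
    exact ⟨t, (biInter_subset_of_mem hK).trans ht⟩
  have hsat : nhdsKer (⋂ K ∈ d, K.1) ⊆ ⋂ K ∈ d, K.1 :=
    nhdsKer_iInter_subset.trans <| iInter_mono fun K => nhdsKer_iInter_subset.trans <|
      iInter_mono fun _ => K.nhdsKer_coe.le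
  let I : UpperPS X := ⟨_, hcomp, eq_sInter_of_nhdsKer_subset hsat⟩
  exact Subset.antisymm (subset_iInter₂ fun K hK => ha.1 hK)
    (ha.2 (show I ∈ upperBounds d from fun K hK => biInter_subset_of_mem hK))

theorem isScottOpen_setOf_subset [QuasiSober X] {U : Set X} (hU : IsOpen U) :
    IsScottOpen {K : UpperPS X | K.1 ⊆ U} :=
  ⟨fun _ _ hab ha => Subset.trans hab ha, fun _ hne hdir _ ha haU =>
    exists_mem_subset_of_iInter_subset hne hdir hU (coe_eq_iInter_of_isLUB hne hdir ha ▸ haU)⟩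

theorem exists_monotone_isLUB_le (K : UpperPS X) {L : ℕ → UpperPS X}
    (hL : Tendsto (fun n => (L n).1) atTop (𝓝ˢ K.1).smallSets) :
    ∃ C : ℕ → UpperPS X, Monotone C ∧ IsLUB (range C) K ∧ ∀ n, C n ≤ L n := by
  let S n := K.1 ∪ ⋃ m, (L (m + n)).1
  have hS n : IsCompact (S n) := isCompact_union_iUnion_of_tendsto_smallSets K.2.1
    (fun m => (L (m + n)).2.1) (hL.comp (tendsto_add_atTop_nat n))
  refine ⟨fun n => saturation (hS n), fun m n hmn => ?_, ⟨?_, fun Q hQ => ?_⟩, fun n => ?_⟩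
  · obtain ⟨j, rfl⟩ := Nat.exists_eq_add_of_le hmn
    refine nhdsKer_mono (union_subset_union_right _ (iUnion_subset fun k => ?_))
    exact subset_iUnion_of_subset (k + j) (by rw [show k + j + m = k + (m + j) by omega])
  · rintro _ ⟨n, rfl⟩
    exact subset_union_left.trans subset_nhdsKer
  · change Q.1 ⊆ K.1
    rw [← K.nhdsKer_coe]
    refine subset_nhdsKer_iff.2 fun U hU hKU => ?_
    obtain ⟨N, hN⟩ :=
      eventually_atTop.1 (tendsto_smallSets_iff.1 hL U (hU.mem_nhdsSet.2 hKU))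
    refine Subset.trans (hQ (mem_range_self N)) (nhdsKer_minimal ?_ hU)
    exact union_subset hKU (iUnion_subset fun m => hN _ (Nat.le_add_left N m))
  · change (L n).1 ⊆ nhdsKer (S n)
    refine Subset.trans ?_ (subset_union_right.trans subset_nhdsKer)
    exact subset_iUnion_of_subset 0 (by rw [zero_add])

theorem isOpen_of_isScottOpen [SecondCountableTopology X] {𝒰 : Set (UpperPS X)}
    (h𝒰 : IsScottOpen 𝒰) : IsOpen 𝒰 := by
  refine isOpen_iff_forall_mem_open.2 fun K hK => ?_
  have := K.2.1.isCountablyGenerated_nhdsSet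
  obtain ⟨W, hW, hWK⟩ := (hasBasis_nhdsSet K.1).exists_antitone_subbasis
  suffices ∃ n, {L : UpperPS X | L.1 ⊆ W n} ⊆ 𝒰 from
    let ⟨n, hn⟩ := this
    ⟨_, hn, isOpen_setOf_subset (hW n).1, (hW n).2⟩
  by_contra! h
  choose L hLW hL𝒰 using fun n => not_subset.1 (h n)
  obtain ⟨C, hCmono, hCK, hCL⟩ :=
    exists_monotone_isLUB_le K (hWK.tendsto_smallSets.smallSets_mono (.of_forall hLW))
  obtain ⟨_, ⟨n, rfl⟩, hn⟩ :=
    h𝒰.2 (range C) (range_nonempty C) (directedOn_range.2 hCmono.directed_le) K hCK hK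
  exact hL𝒰 n (h𝒰.1 (hCL n) hn)

end UpperPS

theorem upperVietoris_eq_scott_general (X : Type*) [TopologicalSpace X]
    [SecondCountableTopology X] [QuasiSober X] :
    (inferInstance : TopologicalSpace (UpperPS X)) = scottTop (UpperPS X) :=
  le_antisymm (le_generateFrom fun _ => UpperPS.isOpen_of_isScottOpen) <|
    le_generateFrom fun _ ⟨_, hU, hs⟩ =>
      hs ▸ TopologicalSpace.isOpen_generateFrom_of_mem (UpperPS.isScottOpen_setOf_subset hU)

/-- If `X` is sober and countably based, the upper Vietoris topology on `K(X)` coincides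
with the Scott topology for the reverse-inclusion order. -/
theorem upperVietoris_eq_scott (X : Type*) [TopologicalSpace X]
    [SecondCountableTopology X] [QuasiSober X] [T0Space X] :
    (inferInstance : TopologicalSpace (UpperPS X)) = scottTop (UpperPS X) :=
  upperVietoris_eq_scott_general X
end

section
/- If X is a countably based T0-space, then the image of the unit map η : X → K(X), x ↦ ↑{x}, is a Π⁰₂-subset of K(X). -/
open Set Topology

/-!
A compact saturated set `K` is of the form `↑{x}` iff whenever `K` is covered by finitely many
basic opens, one of them already contains `K`: if not, every point of `K` has a basic
neighbourhood missing part of `K`, and a finite subcover of these contradicts the condition.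
With a countable basis there are only countably many finite families of basic opens, and each
instance of the condition is an implication `K ∈ □(⋃ F) → K ∈ ⋃_{B ∈ F} □B` between opens of `K(X)`.
-/

theorem IsPi02.of_countable {Y ι : Type*} [TopologicalSpace Y] [Countable ι] {S : Set Y}
    (U V : ι → Set Y) (hU : ∀ i, IsOpen (U i)) (hV : ∀ i, IsOpen (V i))
    (hS : ∀ y, y ∈ S ↔ ∀ i, y ∈ U i → y ∈ V i) : IsPi02 S := by
  rcases isEmpty_or_nonempty ι with hι | hι
  · exact ⟨fun _ => ∅, fun _ => ∅, fun _ => isOpen_empty, fun _ => isOpen_empty,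
      fun y => by simp [hS y]⟩
  · obtain ⟨e, he⟩ := exists_surjective_nat ι
    exact ⟨U ∘ e, V ∘ e, fun n => hU (e n), fun n => hV (e n),
      fun y => (hS y).trans he.forall⟩

theorem UpperPS.isOpen_box {X : Type*} [TopologicalSpace X] {U : Set X} (hU : IsOpen U) :
    IsOpen {K : UpperPS X | K.1 ⊆ U} :=
  TopologicalSpace.isOpen_generateFrom_of_mem ⟨U, hU, rfl⟩

theorem UpperPS.val_eq_sInter_nhds_iff {X : Type*} [TopologicalSpace X] (K : UpperPS X) :
    (∃ x : X, K.1 = ⋂₀ {U : Set X | IsOpen U ∧ x ∈ U}) ↔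
      ∃ x ∈ K.1, ∀ U : Set X, IsOpen U → x ∈ U → K.1 ⊆ U := by
  constructor
  · rintro ⟨x, hK⟩
    refine ⟨x, hK ▸ fun U hU => hU.2, fun U hU hxU => ?_⟩
    rw [hK]
    exact sInter_subset_of_mem ⟨hU, hxU⟩
  · rintro ⟨x, hxK, hx⟩
    refine ⟨x, subset_antisymm (subset_sInter fun U hU => hx U hU.1 hU.2) ?_⟩
    calc ⋂₀ {U : Set X | IsOpen U ∧ x ∈ U}
        ⊆ ⋂₀ {U : Set X | IsOpen U ∧ K.1 ⊆ U} :=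
          sInter_subset_sInter fun U hU => ⟨hU.1, hU.2 hxK⟩
      _ = K.1 := K.2.2.symm

theorem IsCompact.exists_forall_isOpen_subset_of_basis {X : Type*} [TopologicalSpace X]
    {B : Set (Set X)} (hB : TopologicalSpace.IsTopologicalBasis B) {K : Set X}
    (hK : IsCompact K)
    (h : ∀ F ⊆ B, F.Finite → K ⊆ ⋃₀ F → ∃ b ∈ F, K ⊆ b) :
    ∃ x ∈ K, ∀ U : Set X, IsOpen U → x ∈ U → K ⊆ U := by
  by_contra! hno
  set C := {b ∈ B | ¬K ⊆ b}
  have hcover : K ⊆ ⋃ b ∈ C, b := fun x hx => by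
    obtain ⟨U, hU, hxU, hKU⟩ := hno x hx
    obtain ⟨b, hbB, hxb, hbU⟩ := hB.exists_subset_of_mem_open hxU hU
    exact mem_biUnion ⟨hbB, fun hKb => hKU (hKb.trans hbU)⟩ hxb
  obtain ⟨F, hFC, hF, hKF⟩ :=
    hK.elim_finite_subcover_image (fun b hb => hB.isOpen hb.1) hcover
  obtain ⟨b, hbF, hKb⟩ :=
    h F (fun b hb => (hFC hb).1) hF (sUnion_eq_biUnion ▸ hKF)
  exact (hFC hbF).2 hKb

theorem range_upper_unit_pi02_general (X : Type*) [TopologicalSpace X]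
    [SecondCountableTopology X] :
    IsPi02 {K : UpperPS X | ∃ x : X, K.1 = ⋂₀ {U : Set X | IsOpen U ∧ x ∈ U}} := by
  set B := TopologicalSpace.countableBasis X
  have hB := TopologicalSpace.isBasis_countableBasis X
  let ι := {F : Set (Set X) // F.Finite ∧ F ⊆ B}
  have : Countable ι :=
    (countable_ofPred_finite_subset (TopologicalSpace.countable_countableBasis X)).to_subtype
  refine IsPi02.of_countable (fun F : ι => {K : UpperPS X | K.1 ⊆ ⋃₀ F.1})
    (fun F => ⋃ b ∈ F.1, {K : UpperPS X | K.1 ⊆ b})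
    (fun F => UpperPS.isOpen_box (isOpen_sUnion fun b hb => hB.isOpen (F.2.2 hb)))
    (fun F => isOpen_biUnion fun b hb => UpperPS.isOpen_box (hB.isOpen (F.2.2 hb)))
    fun K => ?_
  simp only [mem_ofPred_eq, mem_iUnion₂, UpperPS.val_eq_sInter_nhds_iff, exists_prop]
  constructor
  · rintro ⟨x, hxK, hx⟩ F hKF
    obtain ⟨b, hbF, hxb⟩ := hKF hxK
    exact ⟨b, hbF, hx b (hB.isOpen (F.2.2 hbF)) hxb⟩
  · intro hK
    exact K.2.1.exists_forall_isOpen_subset_of_basis hB fun F hFB hF => hK ⟨F, hF, hFB⟩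

/-- For a countably based T0-space, the image of the unit `x ↦ ↑{x}` (the saturation of
`{x}`, i.e. the intersection of all open neighborhoods of `x`) is a `Π⁰₂` subset of
`K(X)`. -/
theorem range_upper_unit_pi02 (X : Type*) [TopologicalSpace X]
    [SecondCountableTopology X] [T0Space X] :
    IsPi02 {K : UpperPS X | ∃ x : X, K.1 = ⋂₀ {U : Set X | IsOpen U ∧ x ∈ U}} :=
  range_upper_unit_pi02_general X
end

section
/- If X is a quasi-Polish space, then the upper powerspace K(X) with the upper Vietoris topology is quasi-Polish. -/
open Set Topology

section UPQPAux

open TopologicalSpace Classical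

noncomputable section

namespace UPQP

/-- Basic open subsets of `P(ω)`. -/
def bas (F : Finset ℕ) : Set (Set ℕ) := {y : Set ℕ | ↑F ⊆ y}

lemma isOpen_bas (F : Finset ℕ) : IsOpen (bas F) :=
  isOpen_generateFrom_of_mem ⟨F, rfl⟩

lemma mem_bas {F : Finset ℕ} {y : Set ℕ} : y ∈ bas F ↔ ↑F ⊆ y := Iff.rfl

/-- Characterization of open sets of `P(ω)`. -/
lemma isOpen_iff {W : Set (Set ℕ)} :
    IsOpen W ↔ ∀ y ∈ W, ∃ F : Finset ℕ, ↑F ⊆ y ∧ bas F ⊆ W := by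
  constructor
  · intro h
    have hgen : TopologicalSpace.GenerateOpen
        {S | ∃ F : Finset ℕ, S = {x : Set ℕ | ↑F ⊆ x}} W := h
    clear h
    induction hgen with
    | basic s hs =>
      obtain ⟨F, rfl⟩ := hs
      intro y hy
      exact ⟨F, hy, fun z hz => hz⟩
    | univ => intro y _; exact ⟨∅, by simp, fun z _ => trivial⟩
    | inter s t _ _ ihs iht =>
      intro y hy
      obtain ⟨F, hF, hFs⟩ := ihs y hy.1
      obtain ⟨G, hG, hGt⟩ := iht y hy.2
      refine ⟨F ∪ G, by rw [Finset.coe_union]; exact union_subset hF hG, ?_⟩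
      intro z hz
      rw [mem_bas, Finset.coe_union, union_subset_iff] at hz
      exact ⟨hFs hz.1, hGt hz.2⟩
    | sUnion 𝒮 _ ih =>
      intro y hy
      obtain ⟨s, hs, hys⟩ := hy
      obtain ⟨F, hF, hFs⟩ := ih s hs y hys
      exact ⟨F, hF, fun z hz => ⟨s, hs, hFs hz⟩⟩
  · intro h
    have : W = ⋃ F ∈ {F : Finset ℕ | bas F ⊆ W}, bas F := by
      apply Set.Subset.antisymm
      · intro y hy
        obtain ⟨F, hF, hFW⟩ := h y hy
        exact Set.mem_biUnion hFW hF
      · intro y hy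
        obtain ⟨F, hF, hyF⟩ := Set.mem_iUnion₂.1 hy
        exact hF hyF
    rw [this]
    exact isOpen_biUnion fun F _ => isOpen_bas F

/-- Open sets of `P(ω)` are upward closed. -/
lemma mem_of_subset {W : Set (Set ℕ)} (hW : IsOpen W) {y z : Set ℕ}
    (hy : y ∈ W) (hyz : y ⊆ z) : z ∈ W := by
  obtain ⟨F, hF, hFW⟩ := isOpen_iff.1 hW y hy
  exact hFW (Set.Subset.trans hF hyz)

/-- The open set determined by a finite family of finite sets. -/
def Bf (𝔽 : Finset (Finset ℕ)) : Set (Set ℕ) := ⋃ F ∈ 𝔽, bas F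

lemma isOpen_Bf (𝔽 : Finset (Finset ℕ)) : IsOpen (Bf 𝔽) :=
  isOpen_biUnion fun F _ => isOpen_bas F

lemma mem_Bf {𝔽 : Finset (Finset ℕ)} {y : Set ℕ} :
    y ∈ Bf 𝔽 ↔ ∃ F ∈ 𝔽, ↑F ⊆ y := by
  simp [Bf, mem_bas]

/-- A compact set inside an open set is inside some `Bf` inside the open set. -/
lemma compact_subset {C W : Set (Set ℕ)} (hC : IsCompact C) (hW : IsOpen W)
    (hCW : C ⊆ W) : ∃ 𝔽 : Finset (Finset ℕ), C ⊆ Bf 𝔽 ∧ Bf 𝔽 ⊆ W := by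
  classical
  have hcov : C ⊆ ⋃ F : {F : Finset ℕ // bas F ⊆ W}, bas F.1 := by
    intro y hy
    obtain ⟨F, hF, hFW⟩ := isOpen_iff.1 hW y (hCW hy)
    exact Set.mem_iUnion.2 ⟨⟨F, hFW⟩, hF⟩
  obtain ⟨t, ht⟩ := hC.elim_finite_subcover (fun F : {F : Finset ℕ // bas F ⊆ W} => bas F.1)
      (fun F => isOpen_bas F.1) hcov
  refine ⟨t.image Subtype.val, ?_, ?_⟩
  · intro y hy
    obtain ⟨F, hFt, hyF⟩ := Set.mem_iUnion₂.1 (ht hy)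
    exact mem_Bf.2 ⟨F.1, Finset.mem_image_of_mem _ hFt, hyF⟩
  · intro y hy
    obtain ⟨F, hFt, hyF⟩ := mem_Bf.1 hy
    obtain ⟨G, hGt, rfl⟩ := Finset.mem_image.1 hFt
    exact G.2 hyF


/-- Encoding of finite families of finite sets. -/
def fam (n : ℕ) : Finset (Finset ℕ) := Denumerable.ofNat (Finset (Finset ℕ)) n

lemma fam_surj (𝔽 : Finset (Finset ℕ)) : ∃ n, fam n = 𝔽 :=
  ⟨_, Denumerable.ofNat_encode (α := Finset (Finset ℕ)) 𝔽⟩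

def famB (n : ℕ) : Set (Set ℕ) := Bf (fam n)

lemma isOpen_famB (n : ℕ) : IsOpen (famB n) := isOpen_Bf _

/-- Finite intersections of the `famB`. -/
def Kn (N : Finset ℕ) : Set (Set ℕ) := {y : Set ℕ | ∀ n ∈ N, y ∈ famB n}

/-- The compact saturated set coded by `x : P(ω)`. -/
def Kx (x : Set ℕ) : Set (Set ℕ) := {y : Set ℕ | ∀ n ∈ x, y ∈ famB n}

lemma Kx_subset_Kn {x : Set ℕ} {N : Finset ℕ} (h : ↑N ⊆ x) : Kx x ⊆ Kn N :=
  fun _ hy n hn => hy n (h hn)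

lemma Kx_subset_famB {x : Set ℕ} {n : ℕ} (h : n ∈ x) : Kx x ⊆ famB n :=
  fun _ hy => hy n h

lemma Bf_inter (𝔸 𝔹 : Finset (Finset ℕ)) :
    Bf 𝔸 ∩ Bf 𝔹 = Bf (Finset.image₂ (· ∪ ·) 𝔸 𝔹) := by
  classical
  ext y
  simp only [Set.mem_inter_iff, mem_Bf, Finset.mem_image₂]
  constructor
  · rintro ⟨⟨F, hF, hFy⟩, ⟨G, hG, hGy⟩⟩
    exact ⟨F ∪ G, ⟨F, hF, G, hG, rfl⟩, by rw [Finset.coe_union]; exact union_subset hFy hGy⟩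
  · rintro ⟨H, ⟨F, hF, G, hG, rfl⟩, hHy⟩
    rw [Finset.coe_union, union_subset_iff] at hHy
    exact ⟨⟨F, hF, hHy.1⟩, ⟨G, hG, hHy.2⟩⟩

lemma Kn_eq_Bf (N : Finset ℕ) : ∃ 𝔽 : Finset (Finset ℕ), Kn N = Bf 𝔽 := by
  classical
  induction N using Finset.induction with
  | empty =>
    refine ⟨{∅}, ?_⟩
    ext y
    simp [Kn, mem_Bf]
  | insert a N' hn ih =>
    obtain ⟨𝔽, h𝔽⟩ := ih
    refine ⟨Finset.image₂ (· ∪ ·) (fam a) 𝔽, ?_⟩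
    rw [← Bf_inter]
    ext y
    simp only [Kn, Set.mem_setOf_eq, Finset.mem_insert, Set.mem_inter_iff]
    constructor
    · intro h
      refine ⟨h a (Or.inl rfl), ?_⟩
      rw [← h𝔽]
      exact fun n hn' => h n (Or.inr hn')
    · rintro ⟨h1, h2⟩ n hn'
      rcases hn' with rfl | hn'
      · exact h1
      · rw [← h𝔽] at h2
        exact h2 n hn'

lemma isCompact_bas (F : Finset ℕ) : IsCompact (bas F) := by
  refine isCompact_of_finite_subcover fun {ι} U hU hcov => ?_
  have hF : (↑F : Set ℕ) ∈ bas F := Set.Subset.refl _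
  obtain ⟨i, hi⟩ := Set.mem_iUnion.1 (hcov hF)
  refine ⟨{i}, ?_⟩
  intro y hy
  refine Set.mem_iUnion₂.2 ⟨i, Finset.mem_singleton_self i, ?_⟩
  exact mem_of_subset (hU i) hi hy

lemma isCompact_Bf (𝔽 : Finset (Finset ℕ)) : IsCompact (Bf 𝔽) :=
  𝔽.isCompact_biUnion fun F _ => isCompact_bas F

/-- Well-filteredness engine: if the coded compact set is inside an open `W`, then
some finite stage is inside `W`. -/
lemma wf {x : Set ℕ} {W : Set (Set ℕ)} (hW : IsOpen W) (h : Kx x ⊆ W) :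
    ∃ N : Finset ℕ, ↑N ⊆ x ∧ Kn N ⊆ W := by
  classical
  by_cases hfam : ∃ n ∈ x, fam n = ∅
  · obtain ⟨n, hnx, hn⟩ := hfam
    refine ⟨{n}, by simpa using hnx, ?_⟩
    intro y hy
    have : y ∈ famB n := hy n (Finset.mem_singleton_self n)
    rw [famB, hn] at this
    simp [Bf] at this
  · push_neg at hfam
    have hne : ∀ n ∈ x, (fam n).Nonempty := by
      intro n hn
      exact hfam n hn
    letI : TopologicalSpace (Finset ℕ) := ⊥
    haveI : DiscreteTopology (Finset ℕ) := ⟨rfl⟩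
    set s : ℕ → Set (Finset ℕ) := fun n => if n ∈ x then ↑(fam n) else {∅} with hs
    have hT : IsCompact (Set.pi Set.univ s) := by
      refine isCompact_univ_pi fun n => ?_
      by_cases hn : n ∈ x
      · simp only [hs, if_pos hn]
        exact (fam n).finite_toSet.isCompact
      · simp only [hs, if_neg hn]
        exact (Set.finite_singleton _).isCompact
    have hkey : ∀ c ∈ Set.pi Set.univ s, ∃ N : Finset ℕ, ↑N ⊆ x ∧
        ∀ z : Set ℕ, (∀ n ∈ N, ↑(c n) ⊆ z) → z ∈ W := by
      intro c hc
      have hmc : (⋃ n ∈ x, ↑(c n) : Set ℕ) ∈ Kx x := by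
        intro n hn
        have hcn : c n ∈ fam n := by
          have := hc n (Set.mem_univ n)
          simpa only [hs, if_pos hn, Finset.mem_coe] using this
        exact mem_Bf.2 ⟨c n, hcn, fun k hk => Set.mem_biUnion hn hk⟩
      obtain ⟨F, hF, hFW⟩ := isOpen_iff.1 hW _ (h hmc)
      have hch : ∀ k ∈ F, ∃ n ∈ x, k ∈ c n := by
        intro k hk
        have := hF hk
        simpa using this
      choose nk hnk1 hnk2 using hch
      refine ⟨F.attach.image (fun k => nk k.1 k.2), ?_, ?_⟩
      · intro n hn
        simp only [Finset.coe_image, Set.mem_image] at hn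
        obtain ⟨k, _, rfl⟩ := hn
        exact hnk1 k.1 k.2
      · intro z hz
        apply hFW
        intro k hk
        have : ↑(c (nk k hk)) ⊆ z :=
          hz _ (Finset.mem_image_of_mem _ (F.mem_attach ⟨k, hk⟩))
        exact this (hnk2 k hk)
    choose! N hN1 hN2 using hkey
    set O : (ℕ → Finset ℕ) → Set (ℕ → Finset ℕ) :=
      fun c => Set.pi ↑(N c) (fun n => {c n}) with hO
    have hcov : Set.pi Set.univ s ⊆ ⋃ c : {c // c ∈ Set.pi Set.univ s}, O c.1 := by
      intro c hc
      exact Set.mem_iUnion.2 ⟨⟨c, hc⟩, fun n _ => rfl⟩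
    obtain ⟨t, ht⟩ := hT.elim_finite_subcover
      (fun c : {c // c ∈ Set.pi Set.univ s} => O c.1)
      (fun c => isOpen_set_pi (N c.1).finite_toSet (fun n _ => isOpen_discrete _)) hcov
    refine ⟨t.biUnion (fun c => N c.1), ?_, ?_⟩
    · intro n hn
      simp only [Finset.coe_biUnion, Set.mem_iUnion] at hn
      obtain ⟨c, hc, hn⟩ := hn
      exact hN1 c.1 c.2 hn
    · intro z hz
      have hz' : ∀ n ∈ t.biUnion (fun c => N c.1), ∃ F ∈ fam n, ↑F ⊆ z := by
        intro n hn
        exact mem_Bf.1 (hz n hn)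
      choose Fz hFz1 hFz2 using hz'
      set c' : ℕ → Finset ℕ := fun n =>
        if hn : n ∈ t.biUnion (fun c => N c.1) then Fz n hn
        else if hx : n ∈ x then (hne n hx).choose else ∅ with hc'
      have hc'T : c' ∈ Set.pi Set.univ s := by
        intro n _
        by_cases hn : n ∈ t.biUnion (fun c => N c.1)
        · have hnx : n ∈ x := by
            simp only [Finset.mem_biUnion] at hn
            obtain ⟨c, hc, hn'⟩ := hn
            exact hN1 c.1 c.2 hn'
          simp only [hs, if_pos hnx, hc', dif_pos hn]
          exact hFz1 n hn
        · by_cases hx : n ∈ x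
          · simp only [hs, if_pos hx, hc', dif_neg hn, dif_pos hx]
            exact (hne n hx).choose_spec
          · simp only [hs, if_neg hx, hc', dif_neg hn, dif_neg hx]
            rfl
      obtain ⟨c, hct, hcO⟩ := Set.mem_iUnion₂.1 (ht hc'T)
      apply hN2 c.1 c.2
      intro n hn
      have hnb : n ∈ t.biUnion (fun c => N c.1) := Finset.mem_biUnion.2 ⟨c, hct, hn⟩
      have heq : c' n = c.1 n := by
        have := hcO n hn
        simpa using this
      rw [← heq, hc']
      simp only [dif_pos hnb]
      exact hFz2 n hnb

/-- The coded set `Kx x` is compact. -/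
lemma isCompact_Kx (x : Set ℕ) : IsCompact (Kx x) := by
  refine isCompact_of_finite_subcover fun {ι} U hU hcov => ?_
  obtain ⟨N, hNx, hNW⟩ := wf (isOpen_iUnion hU) hcov
  obtain ⟨𝔽, h𝔽⟩ := Kn_eq_Bf N
  obtain ⟨t, ht⟩ := (isCompact_Bf 𝔽).elim_finite_subcover U hU (h𝔽 ▸ hNW)
  exact ⟨t, fun y hy => ht (h𝔽 ▸ Kx_subset_Kn hNx hy)⟩


/-- König-style lemma: extract an increasing branch below `z` through the levels `𝒢 k`. -/
lemma exists_branch (𝒢 : ℕ → Finset (Finset ℕ)) (z : Set ℕ)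
    (hne : ∀ k, ∃ G ∈ 𝒢 k, ↑G ⊆ z)
    (hpar : ∀ k, ∀ G' ∈ 𝒢 (k + 1), ∃ G ∈ 𝒢 k, G ⊆ G') :
    ∃ g : ℕ → Finset ℕ, (∀ k, g k ∈ 𝒢 k ∧ ↑(g k) ⊆ z) ∧ ∀ k, g k ⊆ g (k + 1) := by
  classical
  letI : TopologicalSpace (Finset ℕ) := ⊥
  haveI : DiscreteTopology (Finset ℕ) := ⟨rfl⟩
  set L : ℕ → Set (Finset ℕ) := fun k => {G | G ∈ 𝒢 k ∧ ↑G ⊆ z} with hL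
  have hLfin : ∀ k, (L k).Finite := fun k =>
    Set.Finite.subset (𝒢 k).finite_toSet (fun G hG => hG.1)
  have hLne : ∀ k, (L k).Nonempty := by
    intro k
    obtain ⟨G, h1, h2⟩ := hne k
    exact ⟨G, h1, h2⟩
  have c₀ : ∀ k, ∃ G, G ∈ L k := fun k => hLne k
  choose cd hcd using c₀
  set T : Set (ℕ → Finset ℕ) := Set.pi Set.univ L with hT
  have hTc : IsCompact T := isCompact_univ_pi fun k => (hLfin k).isCompact
  have hTcl : IsClosed T := isClosed_set_pi fun k _ => isClosed_discrete _
  set C : ℕ → Set (ℕ → Finset ℕ) :=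
    fun m => T ∩ {c | ∀ j < m, c j ⊆ c (j + 1)} with hC
  -- chains from any node downward
  have hR : ∀ m, ∀ G ∈ L m, ∃ c : ℕ → Finset ℕ, c m = G ∧ (∀ j ≤ m, c j ∈ L j) ∧
      (∀ j < m, c j ⊆ c (j + 1)) := by
    intro m
    induction m with
    | zero =>
      intro G hG
      exact ⟨fun _ => G, rfl, fun j hj => by simp_all, fun j hj => by omega⟩
    | succ m ih =>
      intro G hG
      obtain ⟨G₀, hG₀, hsub⟩ := hpar m G hG.1
      have hG₀L : G₀ ∈ L m := ⟨hG₀, Set.Subset.trans (by exact_mod_cast hsub) hG.2⟩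
      obtain ⟨c, hcm, hcL, hcchain⟩ := ih G₀ hG₀L
      refine ⟨fun j => if j ≤ m then c j else G, by simp, ?_, ?_⟩
      · intro j hj
        by_cases h : j ≤ m
        · simpa [h] using hcL j h
        · have : j = m + 1 := by omega
          simp [h, this, hG]
      · intro j hj
        rcases Nat.lt_succ_iff_lt_or_eq.1 hj with h | h
        · have h1 : j ≤ m := le_of_lt h
          have h2 : j + 1 ≤ m := h
          simpa [h1, h2] using hcchain j h
        · subst h
          simp [hcm, hsub]
  have hCne : ∀ m, (C m).Nonempty := by
    intro m
    obtain ⟨G, hG⟩ := hLne m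
    obtain ⟨c, hcm, hcL, hcchain⟩ := hR m G hG
    refine ⟨fun j => if j ≤ m then c j else cd j, ⟨?_, ?_⟩⟩
    · intro k _
      by_cases h : k ≤ m
      · simpa [h] using hcL k h
      · simpa [h] using hcd k
    · intro j hj
      have h1 : j ≤ m := le_of_lt hj
      have h2 : j + 1 ≤ m := hj
      simpa [h1, h2] using hcchain j hj
  have hCcl : ∀ m, IsClosed (C m) := by
    intro m
    refine IsClosed.inter hTcl ?_
    have : {c : ℕ → Finset ℕ | ∀ j < m, c j ⊆ c (j + 1)} =
        ⋂ j ∈ Set.Iio m, {c : ℕ → Finset ℕ | c j ⊆ c (j + 1)} := by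
      ext c; simp
    rw [this]
    refine isClosed_biInter fun j _ => ?_
    have : {c : ℕ → Finset ℕ | c j ⊆ c (j + 1)} =
        (fun c : ℕ → Finset ℕ => (c j, c (j + 1))) ⁻¹'
          {p : Finset ℕ × Finset ℕ | p.1 ⊆ p.2} := rfl
    rw [this]
    exact IsClosed.preimage ((continuous_apply j).prodMk (continuous_apply (j + 1)))
      (isClosed_discrete _)
  have hCdec : ∀ m, C (m + 1) ⊆ C m := by
    intro m c hc
    exact ⟨hc.1, fun j hj => hc.2 j (by omega)⟩
  have hC0 : IsCompact (C 0) := hTc.of_isClosed_subset (hCcl 0) Set.inter_subset_left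
  obtain ⟨c, hc⟩ := IsCompact.nonempty_iInter_of_sequence_nonempty_isCompact_isClosed
    C hCdec hCne hC0 hCcl
  have hcT : c ∈ T := (Set.mem_iInter.1 hc 0).1
  refine ⟨c, fun k => hcT k (Set.mem_univ k), fun k => ?_⟩
  exact (Set.mem_iInter.1 hc (k + 1)).2 k (by omega)

lemma branch_mono {g : ℕ → Finset ℕ} (hg : ∀ k, g k ⊆ g (k + 1)) :
    ∀ {k m}, k ≤ m → g k ⊆ g m := by
  intro k m hkm
  induction m with
  | zero => have : k = 0 := by omega
            subst this; exact Finset.Subset.refl _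
  | succ m ih =>
    rcases Nat.lt_succ_iff_lt_or_eq.1 (Nat.lt_succ_of_le hkm) with h | h
    · exact Finset.Subset.trans (ih (by omega)) (hg m)
    · subst h; exact Finset.Subset.refl _


lemma exists_ge_of_injective (f : ℕ → ℕ) (hf : Function.Injective f) (k₀ : ℕ) :
    ∃ n, k₀ ≤ f n := by
  by_contra h
  push_neg at h
  have hmap : ∀ n ∈ Finset.range (k₀ + 1), f n ∈ Finset.range k₀ :=
    fun n _ => Finset.mem_range.2 (h n)
  have := Finset.card_le_card_of_injOn f hmap hf.injOn
  simp only [Finset.card_range] at this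
  omega

section Pi02Section

variable (S : Set (Set ℕ)) (U V : ℕ → Set (Set ℕ))

/-- A good refinement family: refines `𝔽` and handles the requirement `(i, F)`. -/
def goodFam (i : ℕ) (F : Finset ℕ) (𝔽 𝔾 : Finset (Finset ℕ)) : Prop :=
  (∀ G ∈ 𝔾, ∃ F' ∈ 𝔽, F' ⊆ G) ∧ ∀ G ∈ 𝔾, F ⊆ G → (↑G : Set ℕ) ∈ V i

lemma cover_good (hS : ∀ y, y ∈ S ↔ ∀ i, y ∈ U i → y ∈ V i) (hV : ∀ i, IsOpen (V i))
    {C : Set (Set ℕ)} (hC : IsCompact C) (hCS : C ⊆ S) {𝔽 : Finset (Finset ℕ)}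
    (hC𝔽 : C ⊆ Bf 𝔽) {i : ℕ} {F : Finset ℕ} (hUi : bas F ⊆ U i) :
    ∃ 𝔾, goodFam V i F 𝔽 𝔾 ∧ C ⊆ Bf 𝔾 := by
  classical
  have hz : ∀ z ∈ C, ∃ G : Finset ℕ, ↑G ⊆ z ∧ (∃ F' ∈ 𝔽, F' ⊆ G) ∧
      (F ⊆ G → (↑G : Set ℕ) ∈ V i) := by
    intro z hzC
    obtain ⟨F', hF'𝔽, hF'z⟩ := mem_Bf.1 (hC𝔽 hzC)
    by_cases hFz : (↑F : Set ℕ) ⊆ z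
    · have hzU : z ∈ U i := hUi hFz
      have hzV : z ∈ V i := (hS z).1 (hCS hzC) i hzU
      obtain ⟨G', hG'z, hG'V⟩ := isOpen_iff.1 (hV i) z hzV
      refine ⟨F' ∪ G', ?_, ⟨F', hF'𝔽, Finset.subset_union_left⟩, fun _ => ?_⟩
      · rw [Finset.coe_union]
        exact union_subset hF'z hG'z
      · apply hG'V
        intro e he
        exact Finset.mem_coe.2 (Finset.mem_union_right _ he)
    · refine ⟨F', hF'z, ⟨F', hF'𝔽, Finset.Subset.refl _⟩, fun hFG => absurd ?_ hFz⟩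
      intro e he
      exact hF'z (hFG he)
  choose g hg1 hg2 hg3 using hz
  have hcov : C ⊆ ⋃ z : {z // z ∈ C}, bas (g z.1 z.2) := by
    intro z hzC
    exact Set.mem_iUnion.2 ⟨⟨z, hzC⟩, hg1 z hzC⟩
  obtain ⟨t, ht⟩ := hC.elim_finite_subcover (fun z : {z // z ∈ C} => bas (g z.1 z.2))
    (fun z => isOpen_bas _) hcov
  refine ⟨t.image (fun z => g z.1 z.2), ⟨?_, ?_⟩, ?_⟩
  · intro G hG
    obtain ⟨z, _, rfl⟩ := Finset.mem_image.1 hG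
    exact hg2 z.1 z.2
  · intro G hG
    obtain ⟨z, _, rfl⟩ := Finset.mem_image.1 hG
    exact hg3 z.1 z.2
  · intro z hzC
    obtain ⟨w, hwt, hzw⟩ := Set.mem_iUnion₂.1 (ht hzC)
    exact mem_Bf.2 ⟨g w.1 w.2, Finset.mem_image_of_mem _ hwt, hzw⟩

/-- The key construction: given the `Π⁰₂`-style conditions on `x`, every element of
`Kx x` lies above an element of `Kx x ∩ S`. -/
lemma key (hU : ∀ i, IsOpen (U i)) (hV : ∀ i, IsOpen (V i))
    (hS : ∀ y, y ∈ S ↔ ∀ i, y ∈ U i → y ∈ V i) {x : Set ℕ}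
    (hC2 : ∀ (𝔽 : Finset (Finset ℕ)) (i : ℕ) (F : Finset ℕ), bas F ⊆ U i →
      Kx x ⊆ Bf 𝔽 → ∃ 𝔾, goodFam V i F 𝔽 𝔾 ∧ Kx x ⊆ Bf 𝔾)
    {z : Set ℕ} (hz : z ∈ Kx x) :
    ∃ w, w ∈ Kx x ∧ w ∈ S ∧ w ⊆ z := by
  classical
  have hexists : ∀ (n i : ℕ) (F : Finset ℕ) (𝔾 : Finset (Finset ℕ)), Kx x ⊆ Bf 𝔾 →
      ∃ 𝔾', Kx x ⊆ Bf 𝔾' ∧ (∀ G' ∈ 𝔾', ∃ G ∈ 𝔾, G ⊆ G') ∧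
        (n ∈ x → ∀ G' ∈ 𝔾', ∃ H ∈ fam n, H ⊆ G') ∧
        (bas F ⊆ U i → ∀ G' ∈ 𝔾', F ⊆ G' → (↑G' : Set ℕ) ∈ V i) := by
    intro n i F 𝔾 h𝔾
    by_cases hnx : n ∈ x
    · set 𝔾₁ := Finset.image₂ (· ∪ ·) 𝔾 (fam n) with h𝔾₁
      have h1 : Kx x ⊆ Bf 𝔾₁ := by
        rw [h𝔾₁, ← Bf_inter]
        exact fun y hy => ⟨h𝔾 hy, Kx_subset_famB hnx hy⟩
      have href1 : ∀ G₁ ∈ 𝔾₁, (∃ G ∈ 𝔾, G ⊆ G₁) ∧ ∃ H ∈ fam n, H ⊆ G₁ := by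
        intro G₁ hG₁
        obtain ⟨G, hG, H, hH, rfl⟩ := Finset.mem_image₂.1 hG₁
        exact ⟨⟨G, hG, Finset.subset_union_left⟩, ⟨H, hH, Finset.subset_union_right⟩⟩
      by_cases hUF : bas F ⊆ U i
      · obtain ⟨𝔾', hgood, h𝔾'⟩ := hC2 𝔾₁ i F hUF h1
        refine ⟨𝔾', h𝔾', ?_, fun _ G' hG' => ?_, fun _ => hgood.2⟩
        · intro G' hG'
          obtain ⟨F', hF', hF'G'⟩ := hgood.1 G' hG'
          obtain ⟨⟨G, hG, hGF'⟩, _⟩ := href1 F' hF'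
          exact ⟨G, hG, Finset.Subset.trans hGF' hF'G'⟩
        · obtain ⟨F', hF', hF'G'⟩ := hgood.1 G' hG'
          obtain ⟨_, H, hH, hHF'⟩ := href1 F' hF'
          exact ⟨H, hH, Finset.Subset.trans hHF' hF'G'⟩
      · exact ⟨𝔾₁, h1, fun G₁ hG₁ => (href1 G₁ hG₁).1,
          fun _ G₁ hG₁ => (href1 G₁ hG₁).2, fun hUF' => absurd hUF' hUF⟩
    · by_cases hUF : bas F ⊆ U i
      · obtain ⟨𝔾', hgood, h𝔾'⟩ := hC2 𝔾 i F hUF h𝔾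
        exact ⟨𝔾', h𝔾', hgood.1, fun hn => absurd hn hnx, fun _ => hgood.2⟩
      · exact ⟨𝔾, h𝔾, fun G hG => ⟨G, hG, Finset.Subset.refl _⟩,
          fun hn => absurd hn hnx, fun hUF' => absurd hUF' hUF⟩
  choose! nxt hnxt1 hnxt2 hnxt3 hnxt4 using hexists
  set dec : ℕ → ℕ × ℕ × Finset ℕ :=
    fun k => ((Encodable.decode k : Option (ℕ × ℕ × Finset ℕ)).getD (0, 0, ∅)) with hdec
  set g : ℕ → Finset (Finset ℕ) :=
    fun k => Nat.rec {∅} (fun k ih => nxt (dec k).1 (dec k).2.1 (dec k).2.2 ih) k with hg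
  have hg0 : g 0 = {∅} := rfl
  have hgsucc : ∀ k, g (k + 1) = nxt (dec k).1 (dec k).2.1 (dec k).2.2 (g k) := fun k => rfl
  have hinv : ∀ k, Kx x ⊆ Bf (g k) := by
    intro k
    induction k with
    | zero =>
      rw [hg0]
      intro y _
      exact mem_Bf.2 ⟨∅, Finset.mem_singleton_self _, by simp⟩
    | succ k ih =>
      rw [hgsucc k]
      exact hnxt1 _ _ _ _ ih
  have hdec_enc : ∀ t : ℕ × ℕ × Finset ℕ, dec (Encodable.encode t) = t := by
    intro t
    rw [hdec]
    simp [Encodable.encodek]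
  -- extract a branch below z
  obtain ⟨gb, hgb1, hgb2⟩ := exists_branch g z
    (fun k => mem_Bf.1 (hinv k hz))
    (fun k G' hG' => by
      rw [hgsucc k] at hG'
      exact hnxt2 _ _ _ _ (hinv k) G' hG')
  set w : Set ℕ := ⋃ k, ↑(gb k) with hw
  have hsubw : ∀ k, ↑(gb k) ⊆ w := fun k => Set.subset_iUnion (fun k => (↑(gb k) : Set ℕ)) k
  have hwz : w ⊆ z := Set.iUnion_subset fun k => (hgb1 k).2
  have hwK : w ∈ Kx x := by
    intro n hn
    set k := Encodable.encode ((n, 0, (∅ : Finset ℕ)) : ℕ × ℕ × Finset ℕ) with hk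
    have hd : dec k = (n, 0, ∅) := hdec_enc _
    have := hnxt3 (dec k).1 (dec k).2.1 (dec k).2.2 (g k) (hinv k)
    rw [hd] at this
    have hmem : gb (k + 1) ∈ nxt n 0 ∅ (g k) := by
      have h := (hgb1 (k + 1)).1
      rw [hgsucc k, hd] at h
      exact h
    obtain ⟨H, hH, hHG⟩ := this hn (gb (k + 1)) hmem
    refine mem_Bf.2 ⟨H, hH, ?_⟩
    exact Set.Subset.trans (by exact_mod_cast hHG) (hsubw (k + 1))
  have hwS : w ∈ S := by
    rw [hS]
    intro i hwU
    obtain ⟨F, hFw, hFU⟩ := isOpen_iff.1 (hU i) w hwU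
    -- F is contained in some finite stage of the branch
    have hFk : ∀ e ∈ F, ∃ k, e ∈ gb k := by
      intro e he
      have := hFw he
      rw [hw] at this
      simpa using this
    choose ke hke using hFk
    set k₀ := F.attach.sup (fun e => ke e.1 e.2) with hk₀
    have hFk₀ : F ⊆ gb k₀ := by
      intro e he
      have : ke e he ≤ k₀ :=
        Finset.le_sup (f := fun e : {e // e ∈ F} => ke e.1 e.2) (F.mem_attach ⟨e, he⟩)
      exact branch_mono hgb2 this (hke e he)
    -- find a stage ≥ k₀ handling (i, F)
    have hinj : Function.Injective (fun n' : ℕ =>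
        Encodable.encode ((n', i, F) : ℕ × ℕ × Finset ℕ)) := by
      intro a b hab
      have := Encodable.encode_injective hab
      exact (Prod.ext_iff.1 this).1
    obtain ⟨n', hn'⟩ := exists_ge_of_injective _ hinj k₀
    set k := Encodable.encode ((n', i, F) : ℕ × ℕ × Finset ℕ) with hk
    have hd : dec k = (n', i, F) := hdec_enc _
    have hstep := hnxt4 (dec k).1 (dec k).2.1 (dec k).2.2 (g k) (hinv k)
    rw [hd] at hstep
    have hgbk : gb (k + 1) ∈ g (k + 1) := (hgb1 (k + 1)).1
    rw [hgsucc k, hd] at hgbk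
    have hFgb : F ⊆ gb (k + 1) :=
      Finset.Subset.trans hFk₀ (branch_mono hgb2 (Nat.le_succ_of_le hn'))
    have hV' : (↑(gb (k + 1)) : Set ℕ) ∈ V i := hstep hFU (gb (k + 1)) hgbk hFgb
    exact mem_of_subset (hV i) hV' (hsubw (k + 1))
  exact ⟨w, hwK, hwS, hwz⟩


open scoped Classical

/-- The open set used in the conclusion of the second family of conditions. -/
def goodOpen (i : ℕ) (F : Finset ℕ) (𝔽 : Finset (Finset ℕ)) : Set (Set ℕ) :=
  ⋃ (𝔾 : Finset (Finset ℕ)) (N' : Finset ℕ)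
    (_ : goodFam V i F 𝔽 𝔾 ∧ Kn N' ⊆ Bf 𝔾), bas N'

lemma isOpen_goodOpen (i : ℕ) (F : Finset ℕ) (𝔽 : Finset (Finset ℕ)) :
    IsOpen (goodOpen V i F 𝔽) :=
  isOpen_iUnion fun 𝔾 => isOpen_iUnion fun N' => isOpen_iUnion fun _ => isOpen_bas N'

lemma mem_goodOpen {i : ℕ} {F : Finset ℕ} {𝔽 : Finset (Finset ℕ)} {y : Set ℕ} :
    y ∈ goodOpen V i F 𝔽 ↔
      ∃ 𝔾 N', (goodFam V i F 𝔽 𝔾 ∧ Kn N' ⊆ Bf 𝔾) ∧ ↑N' ⊆ y := by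
  simp only [goodOpen, Set.mem_iUnion, mem_bas]
  tauto

/-- Index type for the `Π⁰₂` description of the powerspace. -/
abbrev Idx : Type := (Finset ℕ × ℕ) ⊕ (Finset (Finset ℕ) × ℕ × Finset ℕ × Finset ℕ)

def idxU : Idx → Set (Set ℕ) := fun a =>
  match a with
  | .inl (N, n) => if Kn N ⊆ famB n then bas N else ∅
  | .inr (𝔽, i, F, N) => if bas F ⊆ U i ∧ Kn N ⊆ Bf 𝔽 then bas N else ∅

def idxV : Idx → Set (Set ℕ) := fun a =>
  match a with
  | .inl (N, n) => if Kn N ⊆ famB n then bas {n} else ∅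
  | .inr (𝔽, i, F, N) => if bas F ⊆ U i ∧ Kn N ⊆ Bf 𝔽 then goodOpen V i F 𝔽 else ∅

lemma isOpen_idxU (a : Idx) : IsOpen (idxU U a) := by
  rcases a with ⟨N, n⟩ | ⟨𝔽, i, F, N⟩ <;> simp only [idxU] <;> split <;>
    first | exact isOpen_bas _ | exact isOpen_empty

lemma isOpen_idxV (a : Idx) : IsOpen (idxV U V a) := by
  rcases a with ⟨N, n⟩ | ⟨𝔽, i, F, N⟩ <;> simp only [idxV] <;> split <;>
    first | exact isOpen_bas _ | exact isOpen_goodOpen _ _ _ _ | exact isOpen_empty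

/-- The `Π⁰₂` subset of `P(ω)` representing the upper powerspace. -/
def SK : Set (Set ℕ) := {x | ∀ a : Idx, x ∈ idxU U a → x ∈ idxV U V a}

lemma isPi02_SK : IsPi02 (SK U V) := by
  refine ⟨fun k => match (Encodable.decode k : Option Idx) with
      | some a => idxU U a | none => ∅,
    fun k => match (Encodable.decode k : Option Idx) with
      | some a => idxV U V a | none => ∅, ?_, ?_, ?_⟩
  · intro k
    rcases hd : (Encodable.decode k : Option Idx) with _ | a <;> simp only [hd]
    · exact isOpen_empty
    · exact isOpen_idxU U a
  · intro k
    rcases hd : (Encodable.decode k : Option Idx) with _ | a <;> simp only [hd]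
    · exact isOpen_empty
    · exact isOpen_idxV U V a
  · intro y
    constructor
    · intro hy k
      rcases hd : (Encodable.decode k : Option Idx) with _ | a <;> simp only [hd]
      · exact fun h => h.elim
      · exact hy a
    · intro hy a
      have := hy (Encodable.encode a)
      simp only [Encodable.encodek] at this
      exact this

lemma SK_C1 {x : Set ℕ} (hx : x ∈ SK U V) : ∀ n, Kx x ⊆ famB n → n ∈ x := by
  intro n h
  obtain ⟨N, hNx, hKn⟩ := wf (isOpen_famB n) h
  have := hx (Sum.inl (N, n))
  simp only [idxU, idxV, if_pos hKn] at this
  have hn := this hNx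
  rw [mem_bas] at hn
  simpa using hn

lemma SK_C2 {x : Set ℕ} (hx : x ∈ SK U V) :
    ∀ (𝔽 : Finset (Finset ℕ)) (i : ℕ) (F : Finset ℕ), bas F ⊆ U i →
      Kx x ⊆ Bf 𝔽 → ∃ 𝔾, goodFam V i F 𝔽 𝔾 ∧ Kx x ⊆ Bf 𝔾 := by
  intro 𝔽 i F hUF h
  obtain ⟨N, hNx, hKn⟩ := wf (isOpen_Bf 𝔽) h
  have := hx (Sum.inr (𝔽, i, F, N))
  simp only [idxU, idxV, if_pos (And.intro hUF hKn)] at this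
  obtain ⟨𝔾, N', ⟨hgood, hN'⟩, hN'x⟩ := (mem_goodOpen V).1 (this hNx)
  exact ⟨𝔾, hgood, fun y hy => hN' (fun m hm => hy m (hN'x hm))⟩

/-- Necessity: the code of a compact subset of `S` belongs to `SK`. -/
lemma code_mem_SK (hS : ∀ y, y ∈ S ↔ ∀ i, y ∈ U i → y ∈ V i) (hV : ∀ i, IsOpen (V i))
    {C : Set (Set ℕ)} (hC : IsCompact C) (hCS : C ⊆ S) :
    {n | C ⊆ famB n} ∈ SK U V := by
  intro a ha
  rcases a with ⟨N, n⟩ | ⟨𝔽, i, F, N⟩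
  · simp only [idxU] at ha
    split at ha
    · rename_i hside
      have hCN : C ⊆ Kn N := by
        intro y hy m hm
        exact ha hm hy
      simp only [idxV, if_pos hside]
      rw [mem_bas]
      intro m hm
      rw [Finset.mem_coe, Finset.mem_singleton] at hm
      subst hm
      exact Set.Subset.trans hCN hside
    · exact ha.elim
  · simp only [idxU] at ha
    split at ha
    · rename_i hside
      obtain ⟨hUF, hKn⟩ := hside
      have hC𝔽 : C ⊆ Bf 𝔽 := by
        intro y hy
        exact hKn (fun m hm => ha hm hy)
      obtain ⟨𝔾, hgood, hC𝔾⟩ := cover_good S U V hS hV hC hCS hC𝔽 hUF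
      obtain ⟨n𝔾, hn𝔾⟩ := fam_surj 𝔾
      simp only [idxV, if_pos (And.intro hUF hKn)]
      refine (mem_goodOpen V).2 ⟨𝔾, {n𝔾}, ⟨hgood, ?_⟩, ?_⟩
      · intro y hy
        have := hy n𝔾 (Finset.mem_singleton_self _)
        rwa [famB, hn𝔾] at this
      · intro m hm
        rw [Finset.mem_coe, Finset.mem_singleton] at hm
        subst hm
        show C ⊆ famB m
        rw [famB, hn𝔾]
        exact hC𝔾
    · exact ha.elim

end Pi02Section


section MainHomeo

variable (S : Set (Set ℕ)) (U V : ℕ → Set (Set ℕ))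

/-- The coding map on the powerspace of the subspace `S`. -/
def phi (Q : UpperPS ↥S) : Set ℕ := {n | Subtype.val '' Q.1 ⊆ famB n}

lemma img_compact (Q : UpperPS ↥S) : IsCompact (Subtype.val '' Q.1) :=
  Q.2.1.image continuous_subtype_val

lemma img_subset_S (Q : UpperPS ↥S) : Subtype.val '' Q.1 ⊆ S := by
  rintro y ⟨s, _, rfl⟩
  exact s.2

lemma phi_mem_SK (hS : ∀ y, y ∈ S ↔ ∀ i, y ∈ U i → y ∈ V i) (hV : ∀ i, IsOpen (V i))
    (Q : UpperPS ↥S) : phi S Q ∈ SK U V :=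
  code_mem_SK S U V hS hV (img_compact S Q) (img_subset_S S Q)

/-- The compact saturated subset of `S` coded by `x`. -/
def Qset (x : Set ℕ) : Set ↥S := {s : ↥S | (s : Set ℕ) ∈ Kx x}

lemma img_Qset (x : Set ℕ) : Subtype.val '' Qset S x = Kx x ∩ S := by
  ext y
  constructor
  · rintro ⟨s, hs, rfl⟩
    exact ⟨hs, s.2⟩
  · rintro ⟨hy, hyS⟩
    exact ⟨⟨y, hyS⟩, hy, rfl⟩

lemma key' (hU : ∀ i, IsOpen (U i)) (hV : ∀ i, IsOpen (V i))
    (hS : ∀ y, y ∈ S ↔ ∀ i, y ∈ U i → y ∈ V i) {x : Set ℕ} (hx : x ∈ SK U V) :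
    ∀ z ∈ Kx x, ∃ w, w ∈ Kx x ∧ w ∈ S ∧ w ⊆ z :=
  fun _ hz => key S U V hU hV hS (SK_C2 U V hx) hz

lemma isCompact_Qset (hU : ∀ i, IsOpen (U i)) (hV : ∀ i, IsOpen (V i))
    (hS : ∀ y, y ∈ S ↔ ∀ i, y ∈ U i → y ∈ V i)
    {x : Set ℕ} (hx : x ∈ SK U V) : IsCompact (Qset S x) := by
  classical
  refine isCompact_of_finite_subcover fun {ι} O hO hcov => ?_
  choose W hW1 hW2 using fun i => isOpen_induced_iff.1 (hO i)
  have hKW : Kx x ⊆ ⋃ i, W i := by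
    intro z hz
    obtain ⟨w, hwK, hwS, hwz⟩ := key' S U V hU hV hS hx z hz
    have hwQ : (⟨w, hwS⟩ : ↥S) ∈ Qset S x := hwK
    obtain ⟨i, hi⟩ := Set.mem_iUnion.1 (hcov hwQ)
    rw [← hW2 i] at hi
    exact Set.mem_iUnion.2 ⟨i, mem_of_subset (hW1 i) hi hwz⟩
  obtain ⟨t, ht⟩ := (isCompact_Kx x).elim_finite_subcover W hW1 hKW
  refine ⟨t, fun s hs => ?_⟩
  obtain ⟨i, hit, hiW⟩ := Set.mem_iUnion₂.1 (ht hs)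
  refine Set.mem_iUnion₂.2 ⟨i, hit, ?_⟩
  rw [← hW2 i]
  exact hiW

lemma saturated_Qset (x : Set ℕ) :
    Qset S x = ⋂₀ {O : Set ↥S | IsOpen O ∧ Qset S x ⊆ O} := by
  apply Set.Subset.antisymm
  · intro s hs
    exact Set.mem_sInter.2 fun O hO => hO.2 hs
  · intro s hs
    intro n hn
    have hO : IsOpen (Subtype.val ⁻¹' famB n : Set ↥S) :=
      (isOpen_famB n).preimage continuous_subtype_val
    have hsub : Qset S x ⊆ Subtype.val ⁻¹' famB n := fun s' hs' => hs' n hn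
    exact Set.mem_sInter.1 hs _ ⟨hO, hsub⟩

/-- The element of the powerspace coded by `x ∈ SK`. -/
def Qmk (hU : ∀ i, IsOpen (U i)) (hV : ∀ i, IsOpen (V i))
    (hS : ∀ y, y ∈ S ↔ ∀ i, y ∈ U i → y ∈ V i)
    {x : Set ℕ} (hx : x ∈ SK U V) : UpperPS ↥S :=
  ⟨Qset S x, isCompact_Qset S U V hU hV hS hx, saturated_Qset S x⟩

lemma phi_Qmk (hU : ∀ i, IsOpen (U i)) (hV : ∀ i, IsOpen (V i))
    (hS : ∀ y, y ∈ S ↔ ∀ i, y ∈ U i → y ∈ V i)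
    {x : Set ℕ} (hx : x ∈ SK U V) : phi S (Qmk S U V hU hV hS hx) = x := by
  ext n
  show Subtype.val '' Qset S x ⊆ famB n ↔ n ∈ x
  rw [img_Qset]
  constructor
  · intro h
    apply SK_C1 U V hx n
    intro z hz
    obtain ⟨w, hwK, hwS, hwz⟩ := key' S U V hU hV hS hx z hz
    exact mem_of_subset (isOpen_famB n) (h ⟨hwK, hwS⟩) hwz
  · intro hnx
    exact Set.Subset.trans Set.inter_subset_left (Kx_subset_famB hnx)

lemma Qset_phi (Q : UpperPS ↥S) : Qset S (phi S Q) = Q.1 := by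
  ext s
  constructor
  · intro hs
    have hsat := Q.2.2
    have : s ∈ ⋂₀ {O : Set ↥S | IsOpen O ∧ Q.1 ⊆ O} := by
      refine Set.mem_sInter.2 fun O hO => ?_
      obtain ⟨W, hW, hWO⟩ := isOpen_induced_iff.1 hO.1
      have himgW : Subtype.val '' Q.1 ⊆ W := by
        rintro y ⟨q, hq, rfl⟩
        have := hO.2 hq
        rw [← hWO] at this
        exact this
      obtain ⟨𝔽, h1, h2⟩ := compact_subset (img_compact S Q) hW himgW
      obtain ⟨n𝔽, hn𝔽⟩ := fam_surj 𝔽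
      have hn : n𝔽 ∈ phi S Q := by
        show Subtype.val '' Q.1 ⊆ famB n𝔽
        rw [famB, hn𝔽]
        exact h1
      have hsB : (s : Set ℕ) ∈ famB n𝔽 := hs n𝔽 hn
      rw [famB, hn𝔽] at hsB
      rw [← hWO]
      exact h2 hsB
    rw [hsat]
    exact this
  · intro hs n hn
    exact hn (Set.mem_image_of_mem _ hs)

lemma continuous_phi : Continuous (phi S : UpperPS ↥S → Set ℕ) := by
  refine continuous_generateFrom_iff.2 ?_
  rintro s ⟨F, rfl⟩
  have heq : (phi S) ⁻¹' {x : Set ℕ | ↑F ⊆ x} =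
      ⋂ n ∈ F, {Q : UpperPS ↥S | Q.1 ⊆ Subtype.val ⁻¹' famB n} := by
    ext Q
    simp only [Set.mem_preimage, Set.mem_setOf_eq, Set.mem_iInter]
    constructor
    · intro h n hn s' hs'
      exact h hn (Set.mem_image_of_mem _ hs')
    · intro h n hn
      rintro y ⟨q, hq, rfl⟩
      exact h n hn hq
  rw [heq]
  exact isOpen_biInter_finset fun n _ => isOpen_generateFrom_of_mem
    ⟨Subtype.val ⁻¹' famB n, (isOpen_famB n).preimage continuous_subtype_val, rfl⟩

lemma continuous_psi (hU : ∀ i, IsOpen (U i)) (hV : ∀ i, IsOpen (V i))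
    (hS : ∀ y, y ∈ S ↔ ∀ i, y ∈ U i → y ∈ V i) :
    Continuous (fun xs : ↥(SK U V) => Qmk S U V hU hV hS xs.2) := by
  refine continuous_generateFrom_iff.2 ?_
  rintro s ⟨O, hO, rfl⟩
  obtain ⟨W, hW, hWO⟩ := isOpen_induced_iff.1 hO
  have heq : ((fun xs : ↥(SK U V) => Qmk S U V hU hV hS xs.2) ⁻¹'
        {K : UpperPS ↥S | K.1 ⊆ O}) =
      Subtype.val ⁻¹' (⋃ n ∈ {n : ℕ | famB n ⊆ W}, bas {n}) := by
    ext ⟨x, hx⟩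
    simp only [Set.mem_preimage, Set.mem_setOf_eq, Set.mem_iUnion₂, Set.mem_iUnion]
    constructor
    · intro h
      have himgW : Subtype.val '' Qset S x ⊆ W := by
        rintro y ⟨q, hq, rfl⟩
        have := h hq
        rw [← hWO] at this
        exact this
      obtain ⟨𝔽, h1, h2⟩ := compact_subset
        ((isCompact_Qset S U V hU hV hS hx).image continuous_subtype_val) hW himgW
      obtain ⟨n𝔽, hn𝔽⟩ := fam_surj 𝔽
      have hn : n𝔽 ∈ x := by
        rw [← phi_Qmk S U V hU hV hS hx]
        show Subtype.val '' Qset S x ⊆ famB n𝔽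
        rw [famB, hn𝔽]
        exact h1
      refine ⟨n𝔽, ⟨?_, ?_⟩⟩
      · rw [famB, hn𝔽]
        exact h2
      · rw [mem_bas]
        simpa using hn
    · rintro ⟨n, hnW, hnx⟩
      intro s' hs'
      rw [← hWO]
      apply Set.mem_preimage.2
      apply hnW
      apply hs' n
      rw [mem_bas] at hnx
      simpa using hnx
  rw [heq]
  exact (isOpen_biUnion fun n _ => isOpen_bas {n}).preimage continuous_subtype_val

/-- The main homeomorphism. -/
def mainHomeo (hU : ∀ i, IsOpen (U i)) (hV : ∀ i, IsOpen (V i))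
    (hS : ∀ y, y ∈ S ↔ ∀ i, y ∈ U i → y ∈ V i) : UpperPS ↥S ≃ₜ ↥(SK U V) where
  toFun Q := ⟨phi S Q, phi_mem_SK S U V hS hV Q⟩
  invFun xs := Qmk S U V hU hV hS xs.2
  left_inv Q := Subtype.ext (Qset_phi S Q)
  right_inv xs := Subtype.ext (phi_Qmk S U V hU hV hS xs.2)
  continuous_toFun := (continuous_phi S).subtype_mk _
  continuous_invFun := continuous_psi S U V hU hV hS

end MainHomeo


section Functor

variable {X Y : Type*} [TopologicalSpace X] [TopologicalSpace Y]

lemma saturated_image (e : X ≃ₜ Y) {K : Set X}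
    (hK : K = ⋂₀ {O : Set X | IsOpen O ∧ K ⊆ O}) :
    e '' K = ⋂₀ {O : Set Y | IsOpen O ∧ e '' K ⊆ O} := by
  apply Set.Subset.antisymm
  · intro y hy
    exact Set.mem_sInter.2 fun O hO => hO.2 hy
  · intro y hy
    have hsymm : e.symm y ∈ K := by
      rw [hK]
      refine Set.mem_sInter.2 fun O hO => ?_
      have hO' : IsOpen (e.symm ⁻¹' O : Set Y) := hO.1.preimage e.symm.continuous
      have hsub : e '' K ⊆ e.symm ⁻¹' O := by
        rintro z ⟨k, hk, rfl⟩
        have : e.symm (e k) = k := e.symm_apply_apply k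
        rw [Set.mem_preimage, this]
        exact hO.2 hk
      exact Set.mem_sInter.1 hy _ ⟨hO', hsub⟩
    exact ⟨e.symm y, hsymm, e.apply_symm_apply y⟩

/-- The action of a homeomorphism on the upper powerspace. -/
def upMap (e : X ≃ₜ Y) (Q : UpperPS X) : UpperPS Y :=
  ⟨e '' Q.1, Q.2.1.image e.continuous, saturated_image e Q.2.2⟩

lemma continuous_upMap (e : X ≃ₜ Y) : Continuous (upMap e) := by
  refine continuous_generateFrom_iff.2 ?_
  rintro s ⟨O, hO, rfl⟩
  have heq : upMap e ⁻¹' {K : UpperPS Y | K.1 ⊆ O} =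
      {Q : UpperPS X | Q.1 ⊆ e ⁻¹' O} := by
    ext Q
    simp only [Set.mem_preimage, Set.mem_setOf_eq, upMap, Set.image_subset_iff]
    exact Set.image_subset_iff
  rw [heq]
  exact isOpen_generateFrom_of_mem ⟨e ⁻¹' O, hO.preimage e.continuous, rfl⟩

/-- The upper powerspace is functorial in homeomorphisms. -/
def homeoUpperPS (e : X ≃ₜ Y) : UpperPS X ≃ₜ UpperPS Y where
  toFun := upMap e
  invFun := upMap e.symm
  left_inv Q := Subtype.ext (by
    show e.symm '' (e '' Q.1) = Q.1
    rw [← Set.image_comp]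
    simp)
  right_inv Q := Subtype.ext (by
    show e '' (e.symm '' Q.1) = Q.1
    rw [← Set.image_comp]
    simp)
  continuous_toFun := continuous_upMap e
  continuous_invFun := continuous_upMap e.symm

end Functor

end UPQP

end

end UPQPAux

/-- The upper powerspace of a quasi-Polish space is quasi-Polish. -/
theorem upperPS_quasiPolish (X : Type*) [TopologicalSpace X] (h : QuasiPolish X) :
    QuasiPolish (UpperPS X) := by
  obtain ⟨S, ⟨U, V, hU, hV, hS⟩, ⟨e⟩⟩ := h
  exact ⟨UPQP.SK U V, UPQP.isPi02_SK U V,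
    ⟨(UPQP.homeoUpperPS e).trans (UPQP.mainHomeo S U V hU hV hS)⟩⟩
end

section
/- For any topological space X, the topology on K(A(X)) (the upper powerspace of the lower powerspace) is generated by the sets □◇U = {𝒦 ∈ K(A(X)) | every A ∈ 𝒦 meets U}, where U ranges over open subsets of X. -/
open Set Topology

/-!
Finite intersections `⋂ᵢ ◇Vᵢ` form a basis of `A(X)`, and because `◇` turns unions into
unions, `(⋂ᵢ ◇Vᵢ) ∪ (⋂ⱼ ◇Wⱼ) = ⋂ᵢⱼ ◇(Vᵢ ∪ Wⱼ)`: the basis is closed under finite unions.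
Hence a compact `𝒦 ⊆ 𝒰` with `𝒰` open in `A(X)` already lies in one basic set
`⋂ᵢ ◇Vᵢ ⊆ 𝒰`, and then `𝒦 ∈ ⋂ᵢ □◇Vᵢ ⊆ □𝒰`, so `□𝒰` is open for the topology generated
by the sets `□◇U`.
-/

open TopologicalSpace

theorem TopologicalSpace.IsTopologicalBasis.exists_subset_of_isCompact_of_supClosed
    {α : Type*} [TopologicalSpace α] {B : Set (Set α)} (hB : IsTopologicalBasis B)
    (hsup : SupClosed B) (hempty : ∅ ∈ B) {K U : Set α} (hK : IsCompact K) (hU : IsOpen U)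
    (hKU : K ⊆ U) : ∃ b ∈ B, K ⊆ b ∧ b ⊆ U := by
  choose! b hbB hxb hbU using fun x (hx : x ∈ K) => hB.exists_subset_of_mem_open (hKU hx) hU
  obtain ⟨t, htK, htf, hKt⟩ := hK.elim_finite_subcover_image (fun x hx => hB.isOpen (hbB x hx))
    fun x hx => mem_biUnion hx (hxb x hx)
  exact ⟨⋃ x ∈ t, b x, hsup.biSup_mem htf hempty fun x hx => hbB x (htK hx), hKt,
    iUnion₂_subset fun x hx => hbU x (htK hx)⟩

namespace LowerPS

variable {X : Type*} [TopologicalSpace X]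

def diamond (U : Set X) : Set (LowerPS X) := {A | (A.1 ∩ U).Nonempty}

theorem isOpen_diamond {U : Set X} (hU : IsOpen U) : IsOpen (diamond U) :=
  isOpen_generateFrom_of_mem ⟨U, hU, rfl⟩

@[simp]
theorem diamond_empty : diamond (∅ : Set X) = ∅ := by
  simp [diamond]

theorem diamond_union (U V : Set X) : diamond (U ∪ V) = diamond U ∪ diamond V := by
  ext A
  simp only [diamond, mem_ofPred_eq, mem_union, inter_union_distrib_left, union_nonempty]

variable (X) in
def basis : Set (Set (LowerPS X)) :=
  {S | ∃ 𝒱 : Set (Opens X), 𝒱.Finite ∧ S = ⋂ V ∈ 𝒱, diamond (V : Set X)}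

theorem diamond_mem_basis (U : Opens X) : diamond (U : Set X) ∈ basis X :=
  ⟨{U}, finite_singleton U, by simp⟩

theorem univ_mem_basis : univ ∈ basis X :=
  ⟨∅, finite_empty, by simp⟩

theorem empty_mem_basis : ∅ ∈ basis X := by
  simpa using diamond_mem_basis (⊥ : Opens X)

theorem infClosed_basis : InfClosed (basis X) := by
  rintro _ ⟨𝒱, h𝒱, rfl⟩ _ ⟨𝒲, h𝒲, rfl⟩
  exact ⟨𝒱 ∪ 𝒲, h𝒱.union h𝒲, (biInter_union _ _ _).symm⟩

theorem supClosed_basis : SupClosed (basis X) := by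
  rintro _ ⟨𝒱, h𝒱, rfl⟩ _ ⟨𝒲, h𝒲, rfl⟩
  refine ⟨image2 (· ⊔ ·) 𝒱 𝒲, h𝒱.image2 _ h𝒲, ?_⟩
  simp only [biInter_image2, Opens.coe_sup, diamond_union]
  exact (iInter₂_union _ _).trans (by simp only [union_iInter₂])

theorem isTopologicalBasis_basis : IsTopologicalBasis (basis X) := by
  have h := isTopologicalBasis_of_subbasis_of_inter (r := basis X) ?_ infClosed_basis
  · rwa [insert_eq_of_mem univ_mem_basis] at h
  refine le_antisymm (le_generateFrom ?_) (le_generateFrom ?_)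
  · rintro _ ⟨𝒱, h𝒱, rfl⟩
    exact h𝒱.isOpen_biInter fun V _ => isOpen_diamond V.isOpen
  · rintro _ ⟨U, hU, rfl⟩
    exact isOpen_generateFrom_of_mem (diamond_mem_basis ⟨U, hU⟩)

theorem exists_basis_subset_of_isCompact {𝒦 𝒰 : Set (LowerPS X)} (h𝒦 : IsCompact 𝒦)
    (h𝒰 : IsOpen 𝒰) (h𝒦𝒰 : 𝒦 ⊆ 𝒰) : ∃ 𝒱 : Set (Opens X), 𝒱.Finite ∧
      𝒦 ⊆ ⋂ V ∈ 𝒱, diamond (V : Set X) ∧ ⋂ V ∈ 𝒱, diamond (V : Set X) ⊆ 𝒰 := by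
  obtain ⟨_, ⟨𝒱, h𝒱, rfl⟩, h⟩ := isTopologicalBasis_basis.exists_subset_of_isCompact_of_supClosed
    supClosed_basis empty_mem_basis h𝒦 h𝒰 h𝒦𝒰
  exact ⟨𝒱, h𝒱, h⟩

end LowerPS

open LowerPS in
theorem isOpen_box_of_isOpen_boxDia {X : Type*} [TopologicalSpace X]
    {t : TopologicalSpace (UpperPS (LowerPS X))} (ht : ∀ U, IsOpen U → IsOpen[t] (boxDia U))
    {𝒰 : Set (LowerPS X)} (h𝒰 : IsOpen 𝒰) : IsOpen[t] {𝒦 : UpperPS (LowerPS X) | 𝒦.1 ⊆ 𝒰} := by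
  refine @isOpen_iff_forall_mem_open _ t _ |>.2 fun 𝒦 h𝒦 => ?_
  obtain ⟨𝒱, h𝒱, h𝒦𝒱, h𝒱𝒰⟩ := exists_basis_subset_of_isCompact 𝒦.2.1 h𝒰 h𝒦
  refine ⟨⋂ V ∈ 𝒱, boxDia (V : Set X), fun 𝒧 h𝒧 A hA => h𝒱𝒰 ?_, ?_, ?_⟩
  · exact mem_iInter₂.2 fun V hV => mem_iInter₂.1 h𝒧 V hV A hA
  · exact @Finite.isOpen_biInter _ _ t _ _ h𝒱 fun V _ => ht V V.isOpen
  · exact mem_iInter₂.2 fun V hV A hA => mem_iInter₂.1 (h𝒦𝒱 hA) V hV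

/-- The upper Vietoris topology on `K(A(X))` is generated by the sets
`□◇U = {𝒦 | ∀ A ∈ 𝒦, A ∩ U ≠ ∅}` for `U` open in `X`. -/
theorem upperPS_lowerPS_topology_generated (X : Type*) [TopologicalSpace X] :
    (inferInstance : TopologicalSpace (UpperPS (LowerPS X))) =
      .generateFrom {S | ∃ U : Set X, IsOpen U ∧ S = boxDia U} := by
  refine le_antisymm (le_generateFrom ?_) (le_generateFrom ?_)
  · rintro _ ⟨U, hU, rfl⟩
    exact isOpen_generateFrom_of_mem ⟨LowerPS.diamond U, LowerPS.isOpen_diamond hU, rfl⟩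
  · rintro _ ⟨𝒰, h𝒰, rfl⟩
    refine isOpen_box_of_isOpen_boxDia (fun U hU => ?_) h𝒰
    exact isOpen_generateFrom_of_mem ⟨U, hU, rfl⟩
end

section
/- For any topological space X, the upper Vietoris topology on K(A(X)) coincides with the weak topology (generated by complements of principal downsets). -/
open Set Topology

/-!
In `A(X)` the specialization order is reverse inclusion, so compact saturated families are
closed under supersets and the weak subbasic set attached to the saturation `↑C` of a point is
`{𝒦 | C ∉ 𝒦}`. Each `𝒦'` is the intersection of its open neighbourhoods, so `¬ 𝒦 ⊆ 𝒦'` is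
witnessed by a box `□𝒰 ∋ 𝒦'` missing a point of `𝒦`: weak-open sets are Vietoris-open.
Conversely, given `𝒦 ⊆ 𝒰`, compactness yields `𝒦 ⊆ 𝒱 ⊆ 𝒰` with `𝒱` a finite union of finite
intersections of sets `◇U`. A closed set avoids `𝒱` iff it is contained in one of the finitely
many closed sets `C_σ = ⋂ (σ F)ᶜ`, where `σ` selects one `U` from each intersection; hence
`□𝒱 = ⋂_σ {𝒦 | C_σ ∉ 𝒦}` is weak-open.
-/

open TopologicalSpace

namespace UpperPS

/-- For the reverse-inclusion order, `{K' | ¬ K.1 ⊆ K'.1}` is the complement of `↓K`. -/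
def weakTopology (Y : Type*) [TopologicalSpace Y] : TopologicalSpace (UpperPS Y) :=
  .generateFrom {S | ∃ K : UpperPS Y, S = {K' : UpperPS Y | ¬ K.1 ⊆ K'.1}}

variable {Y : Type*} [TopologicalSpace Y]

theorem nhdsKer_eq (K : UpperPS Y) : nhdsKer K.1 = K.1 :=
  (nhdsKer_def _).trans K.2.2.symm

theorem mem_of_specializes (K : UpperPS Y) {x y : Y} (hy : y ∈ K.1) (h : x ⤳ y) : x ∈ K.1 :=
  K.nhdsKer_eq ▸ mem_nhdsKer_iff_specializes.2 ⟨y, hy, h⟩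

def principal (y : Y) : UpperPS Y :=
  ⟨nhdsKer {y}, IsCompact.nhdsKer_iff.2 isCompact_singleton,
    by rw [← nhdsKer_def, nhdsKer_nhdsKer]⟩

theorem principal_subset_iff {y : Y} {K : UpperPS Y} : (principal y).1 ⊆ K.1 ↔ y ∈ K.1 :=
  ⟨fun h => h (subset_nhdsKer rfl),
    fun h => K.nhdsKer_eq ▸ nhdsKer_mono (singleton_subset_iff.2 h)⟩

theorem subset_iff_forall_notMem {ι : Type*} {s : Set Y} {c : ι → Y}
    (hs : ∀ y, y ∉ s ↔ ∃ i, c i ⤳ y) (K : UpperPS Y) : K.1 ⊆ s ↔ ∀ i, c i ∉ K.1 := by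
  constructor
  · intro hK i hi
    exact (hs (c i)).2 ⟨i, specializes_rfl⟩ (hK hi)
  · intro hc y hy
    by_contra hys
    obtain ⟨i, hi⟩ := (hs y).1 hys
    exact hc i (K.mem_of_specializes hy hi)

theorem isOpen_weakTopology_setOf_notMem (y : Y) :
    IsOpen[weakTopology Y] {K : UpperPS Y | y ∉ K.1} := by
  simp_rw [← principal_subset_iff]
  exact GenerateOpen.basic _ ⟨principal y, rfl⟩

theorem le_weakTopology : (inferInstance : TopologicalSpace (UpperPS Y)) ≤ weakTopology Y := by
  refine le_generateFrom fun _ ⟨K₀, h⟩ => h ▸ ?_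
  refine isOpen_iff_forall_mem_open.2 fun K hK => ?_
  obtain ⟨y, hyK₀, hyK⟩ := not_subset.1 hK
  obtain ⟨U, hU, hKU, hyU⟩ : ∃ U, IsOpen U ∧ K.1 ⊆ U ∧ y ∉ U := by
    rw [← K.nhdsKer_eq] at hyK
    simpa only [mem_nhdsKer, not_forall, exists_prop] using hyK
  exact ⟨{K' | K'.1 ⊆ U}, fun K' hK' hK₀ => hyU (hK' (hK₀ hyK₀)),
    GenerateOpen.basic _ ⟨U, hU, rfl⟩, hKU⟩

end UpperPS

namespace LowerPS

variable {X : Type*} [TopologicalSpace X]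

def dia (U : Set X) : Set (LowerPS X) := {A | (A.1 ∩ U).Nonempty}

def diaInter (F : Finset (Opens X)) : Set (LowerPS X) := ⋂ U ∈ F, dia (U : Set X)

theorem isOpen_dia {U : Set X} (hU : IsOpen U) : IsOpen (dia U) :=
  GenerateOpen.basic _ ⟨U, hU, rfl⟩

theorem isOpen_diaInter (F : Finset (Opens X)) : IsOpen (diaInter F) :=
  isOpen_biInter_finset fun U _ => isOpen_dia U.isOpen

theorem mem_diaInter_of_subset {F : Finset (Opens X)} {A B : LowerPS X} (hAB : A.1 ⊆ B.1)
    (hA : A ∈ diaInter F) : B ∈ diaInter F :=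
  mem_iInter₂.2 fun U hU => (mem_iInter₂.1 hA U hU).mono (inter_subset_inter_left _ hAB)

theorem exists_diaInter_subset {𝒰 : Set (LowerPS X)} (h𝒰 : IsOpen 𝒰) {A : LowerPS X}
    (hA : A ∈ 𝒰) : ∃ F, A ∈ diaInter F ∧ diaInter F ⊆ 𝒰 := by
  induction h𝒰 generalizing A with
  | basic _ hs =>
    obtain ⟨U, hU, rfl⟩ := hs
    exact ⟨{⟨U, hU⟩}, by simpa [diaInter, dia] using hA, by simp [diaInter, dia]⟩
  | univ => exact ⟨∅, by simp [diaInter], subset_univ _⟩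
  | inter s t _ _ ihs iht =>
    obtain ⟨F, hAF, hFs⟩ := ihs hA.1
    obtain ⟨G, hAG, hGt⟩ := iht hA.2
    classical
    refine ⟨F ∪ G, ?_, ?_⟩ <;> simp only [diaInter, Finset.set_biInter_inter] at *
    exacts [⟨hAF, hAG⟩, inter_subset_inter hFs hGt]
  | sUnion S _ ih =>
    obtain ⟨s, hs, hAs⟩ := hA
    obtain ⟨F, hAF, hFs⟩ := ih s hs hAs
    exact ⟨F, hAF, hFs.trans (subset_sUnion_of_mem hs)⟩

theorem specializes_iff_subset {A B : LowerPS X} : A ⤳ B ↔ B.1 ⊆ A.1 := by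
  rw [specializes_iff_forall_open]
  constructor
  · intro h x hxB
    by_contra hxA
    obtain ⟨y, hyA, hyA'⟩ := h _ (isOpen_dia A.2.isOpen_compl) ⟨x, hxB, hxA⟩
    exact hyA' hyA
  · intro hBA s hs hBs
    obtain ⟨F, hBF, hFs⟩ := exists_diaInter_subset hs hBs
    exact hFs (mem_diaInter_of_subset hBA hBF)

def iInterCompl {ι : Type*} (U : ι → Opens X) : LowerPS X :=
  ⟨⋂ i, (U i : Set X)ᶜ, isClosed_iInter fun i => (U i).isOpen.isClosed_compl⟩

theorem iInterCompl_specializes_iff {ι : Type*} (U : ι → Opens X) (B : LowerPS X) :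
    iInterCompl U ⤳ B ↔ ∀ i, B ∉ dia (U i : Set X) := by
  rw [specializes_iff_subset]
  simp [iInterCompl, dia, subset_compl_iff_disjoint_right, disjoint_iff_inter_eq_empty,
    not_nonempty_iff_eq_empty]

/-- `σ` picks in each basic open a subbasic `◇U` that misses `B`, so `B ⊆ ⋂ F, (σ F)ᶜ`. -/
theorem notMem_biUnion_diaInter_iff (𝔉 : Finset (Finset (Opens X))) (B : LowerPS X) :
    B ∉ ⋃ F ∈ 𝔉, diaInter F ↔
      ∃ σ : (F : 𝔉) → F.1, iInterCompl (fun F => (σ F : Opens X)) ⤳ B := by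
  simp only [iInterCompl_specializes_iff, diaInter, mem_iUnion, mem_iInter, not_exists,
    not_forall]
  constructor
  · intro h
    choose U hUF hU using fun F : 𝔉 => h F F.2
    exact ⟨fun F => ⟨U F, hUF F⟩, hU⟩
  · rintro ⟨σ, hσ⟩ F hF
    exact ⟨_, (σ ⟨F, hF⟩).2, hσ ⟨F, hF⟩⟩

theorem isOpen_weakTopology_setOf_subset_biUnion_diaInter (𝔉 : Finset (Finset (Opens X))) :
    IsOpen[UpperPS.weakTopology (LowerPS X)]
      {K : UpperPS (LowerPS X) | K.1 ⊆ ⋃ F ∈ 𝔉, diaInter F} := by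
  simp_rw [UpperPS.subset_iff_forall_notMem (notMem_biUnion_diaInter_iff 𝔉), ofPred_forall]
  exact @isOpen_iInter_of_finite _ _ (UpperPS.weakTopology _) _ _ fun _ =>
    UpperPS.isOpen_weakTopology_setOf_notMem _

theorem exists_biUnion_diaInter_between {𝒦 𝒰 : Set (LowerPS X)} (h𝒦 : IsCompact 𝒦)
    (h𝒰 : IsOpen 𝒰) (h𝒦𝒰 : 𝒦 ⊆ 𝒰) :
    ∃ 𝔉 : Finset (Finset (Opens X)), 𝒦 ⊆ ⋃ F ∈ 𝔉, diaInter F ∧ ⋃ F ∈ 𝔉, diaInter F ⊆ 𝒰 := by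
  classical
  choose! F hAF hF𝒰 using fun A (hA : A ∈ 𝒰) => exists_diaInter_subset h𝒰 hA
  obtain ⟨t, ht𝒦, h𝒦t⟩ := h𝒦.elim_nhds_subcover (diaInter ∘ F)
    fun A hA => (isOpen_diaInter _).mem_nhds (hAF A (h𝒦𝒰 hA))
  refine ⟨t.image F, ?_, ?_⟩ <;> rw [Finset.set_biUnion_finset_image]
  · exact h𝒦t
  · exact iUnion₂_subset fun A hA => hF𝒰 A (h𝒦𝒰 (ht𝒦 A hA))

theorem weakTopology_le :
    UpperPS.weakTopology (LowerPS X) ≤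
      (inferInstance : TopologicalSpace (UpperPS (LowerPS X))) := by
  refine le_generateFrom fun _ ⟨𝒰, h𝒰, h⟩ => h ▸ ?_
  refine (@isOpen_iff_forall_mem_open _ (UpperPS.weakTopology _) _).2 fun 𝒦 h𝒦 => ?_
  obtain ⟨𝔉, h𝒦𝔉, h𝔉𝒰⟩ := exists_biUnion_diaInter_between 𝒦.2.1 h𝒰 h𝒦
  exact ⟨_, fun 𝒦' h𝒦' => h𝒦'.trans h𝔉𝒰,
    isOpen_weakTopology_setOf_subset_biUnion_diaInter 𝔉, h𝒦𝔉⟩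

end LowerPS

/-- The upper Vietoris topology on `K(A(X))` coincides with the weak topology, generated by
complements of principal downsets for the reverse-inclusion order. -/
theorem upperPS_lowerPS_topology_eq_weak (X : Type*) [TopologicalSpace X] :
    (inferInstance : TopologicalSpace (UpperPS (LowerPS X))) =
      .generateFrom {S | ∃ 𝒦 : UpperPS (LowerPS X),
        S = {𝒦' : UpperPS (LowerPS X) | ¬ 𝒦.1 ⊆ 𝒦'.1}} :=
  le_antisymm UpperPS.le_weakTopology LowerPS.weakTopology_le
end

section
/- For every Scott-open set ℋ ⊆ O(X) and every open U ⊆ X: U ∈ ℋ if and only if every closed set A in ψ(ℋ) = ⋂_{V ∈ ℋ} ◇V meets U. -/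
open Set Topology

/-! The complement of `U` is closed, and it meets an open `V` exactly when `V ⊄ U`. So if `U ∉ ℋ`,
upward closure of `ℋ` makes `Uᶜ` meet every member of `ℋ`, while `Uᶜ` misses `U`. -/

def OpensT.compl {X : Type*} [TopologicalSpace X] (U : OpensT X) : LowerPS X :=
  ⟨U.1ᶜ, U.2.isClosed_compl⟩

theorem OpensT.compl_inter_nonempty_iff {X : Type*} [TopologicalSpace X] (U V : OpensT X) :
    (U.compl.1 ∩ V.1).Nonempty ↔ ¬V ≤ U := by
  rw [inter_comm]
  exact inter_compl_nonempty_iff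

theorem mem_iff_forall_closed_meets_of_isUpperSet {X : Type*} [TopologicalSpace X]
    {ℋ : Set (OpensT X)} (hℋ : IsUpperSet ℋ) (U : OpensT X) :
    U ∈ ℋ ↔
      ∀ A : LowerPS X, (∀ V ∈ ℋ, (A.1 ∩ V.1).Nonempty) → (A.1 ∩ U.1).Nonempty := by
  refine ⟨fun hU A hA => hA U hU, fun h => ?_⟩
  by_contra hU
  have hcompl_meets : ∀ V ∈ ℋ, (U.compl.1 ∩ V.1).Nonempty := fun V hV =>
    (U.compl_inter_nonempty_iff V).mpr fun hVU => hU (hℋ hVU hV)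
  exact (U.compl_inter_nonempty_iff U).mp (h U.compl hcompl_meets) le_rfl

/-- For every Scott-open `ℋ ⊆ O(X)` and open `U`: `U ∈ ℋ` iff every closed set meeting all
members of `ℋ` also meets `U`. -/
theorem mem_scottOpen_iff_psi (X : Type*) [TopologicalSpace X]
    (ℋ : Set (OpensT X)) (hℋ : IsScottOpen ℋ) (U : OpensT X) :
    U ∈ ℋ ↔
      ∀ A : LowerPS X, (∀ V ∈ ℋ, (A.1 ∩ (V : OpensT X).1).Nonempty) →
        (A.1 ∩ U.1).Nonempty :=
  mem_iff_forall_closed_meets_of_isUpperSet hℋ.1 U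
end
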